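/- arXiv:2302.08554 — 12 statements merged into one kernel-verified Lean document; each statement's English description precedes it below -/
import Mathlib

section
/- Let T be a continuous t-norm, A ∈ [0,1]^{n×m}, and F(c)_i = max_j T(a_{ij}, min_k I_T(a_{kj}, c_k)). Then F(c) = c if and only if there exists x ∈ [0,1]^m with max_j T(a_{ij}, x_j) = c_i for all i (i.e., the system A □_T x = c is consistent). -/
theorem stmt_6 {n m : ℕ} (T : ℝ → ℝ → ℝ)
    (hmem : ∀ x ∈ Set.Icc (0:ℝ) 1, ∀ y ∈ Set.Icc (0:ℝ) 1, T x y ∈ Set.Icc (0:ℝ) 1)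
    (hcomm : ∀ x y, T x y = T y x)
    (hassoc : ∀ x y z, T x (T y z) = T (T x y) z)
    (hmono : ∀ x y z, y ≤ z → T x y ≤ T x z)
    (hone : ∀ x, T x 1 = x)
    (hcont : ContinuousOn (fun p : ℝ × ℝ => T p.1 p.2) (Set.Icc 0 1 ×ˢ Set.Icc 0 1))
    (I : ℝ → ℝ → ℝ)
    (hI : ∀ a b, I a b = sSup {z : ℝ | z ∈ Set.Icc (0:ℝ) 1 ∧ T a z ≤ b})
    (A : Fin (n+1) → Fin (m+1) → ℝ)
    (hA : ∀ i j, A i j ∈ Set.Icc (0:ℝ) 1)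
    (F : (Fin (n+1) → ℝ) → Fin (n+1) → ℝ)
    (hF : ∀ c i, F c i = Finset.univ.sup' Finset.univ_nonempty (fun j : Fin (m+1) =>
        T (A i j) (Finset.univ.inf' Finset.univ_nonempty (fun k : Fin (n+1) => I (A k j) (c k)))))
    (c : Fin (n+1) → ℝ) (hc : ∀ i, c i ∈ Set.Icc (0:ℝ) 1) :
    F c = c ↔ ∃ x : Fin (m+1) → ℝ, (∀ j, x j ∈ Set.Icc (0:ℝ) 1) ∧
      ∀ i, Finset.univ.sup' Finset.univ_nonempty (fun j => T (A i j) (x j)) = c i := by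
  -- basic facts
  have hT0 : ∀ a ∈ Set.Icc (0:ℝ) 1, T a 0 = 0 := by
    intro a ha
    have h1 : T 0 a ≤ T 0 1 := hmono 0 a 1 ha.2
    rw [hone] at h1
    have h2 := (hmem a ha 0 ⟨le_refl 0, zero_le_one⟩).1
    rw [hcomm] at h2 ⊢
    exact le_antisymm h1 h2
  -- membership of I a b in its defining set
  have hImem : ∀ a ∈ Set.Icc (0:ℝ) 1, ∀ b : ℝ, 0 ≤ b →
      I a b ∈ {z : ℝ | z ∈ Set.Icc (0:ℝ) 1 ∧ T a z ≤ b} := by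
    intro a ha b hb
    rw [hI]
    set S := {z : ℝ | z ∈ Set.Icc (0:ℝ) 1 ∧ T a z ≤ b} with hSdef
    have h0 : (0:ℝ) ∈ S := ⟨⟨le_refl 0, zero_le_one⟩, by rw [hT0 a ha]; exact hb⟩
    have hbdd : BddAbove S := ⟨1, fun z hz => hz.1.2⟩
    have hcts : ContinuousOn (fun z => T a z) (Set.Icc (0:ℝ) 1) := by
      have := hcont.comp ((continuous_const.prodMk continuous_id).continuousOn
        (s := Set.Icc (0:ℝ) 1)) (fun z hz => Set.mk_mem_prod ha hz)
      exact this
    have hclosed : IsClosed S := by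
      have : S = Set.Icc (0:ℝ) 1 ∩ (fun z => T a z) ⁻¹' Set.Iic b := by
        ext z; simp [hSdef, Set.mem_setOf_eq, and_comm]
      rw [this]
      exact hcts.preimage_isClosed_of_isClosed isClosed_Icc isClosed_Iic
    exact hclosed.csSup_mem ⟨0, h0⟩ hbdd
  have hIub : ∀ a b z : ℝ, z ∈ Set.Icc (0:ℝ) 1 → T a z ≤ b → z ≤ I a b := by
    intro a b z hz hTz
    rw [hI]
    exact le_csSup ⟨1, fun w hw => hw.1.2⟩ ⟨hz, hTz⟩
  -- the candidate solution
  set xs : Fin (m+1) → ℝ := fun j =>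
    Finset.univ.inf' Finset.univ_nonempty (fun k : Fin (n+1) => I (A k j) (c k)) with hxs
  have hxsmem : ∀ j, xs j ∈ Set.Icc (0:ℝ) 1 := by
    intro j
    constructor
    · apply Finset.le_inf'
      intro k _
      exact (hImem (A k j) (hA k j) (c k) (hc k).1).1.1
    · exact le_trans (Finset.inf'_le _ (Finset.mem_univ (0 : Fin (n+1))))
        (hImem (A 0 j) (hA 0 j) (c 0) (hc 0).1).1.2
  constructor
  · intro h
    refine ⟨xs, hxsmem, fun i => ?_⟩
    have := congrFun h i
    rw [hF] at this
    exact this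
  · rintro ⟨x, hx, hxc⟩
    funext i
    rw [hF]
    apply le_antisymm
    · apply Finset.sup'_le
      intro j _
      have h1 : xs j ≤ I (A i j) (c i) := Finset.inf'_le _ (Finset.mem_univ i)
      calc T (A i j) (xs j) ≤ T (A i j) (I (A i j) (c i)) := hmono _ _ _ h1
        _ ≤ c i := (hImem (A i j) (hA i j) (c i) (hc i).1).2
    · rw [← hxc i]
      apply Finset.sup'_le
      intro j _
      have hxle : x j ≤ xs j := by
        apply Finset.le_inf'
        intro k _
        apply hIub (A k j) (c k) (x j) (hx j)
        rw [← hxc k]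
        exact Finset.le_sup' (fun j => T (A k j) (x j)) (Finset.mem_univ j)
      exact le_trans (hmono _ _ _ hxle)
        (Finset.le_sup' (fun j => T (A i j) (xs j)) (Finset.mem_univ j))
end

section
/- Let T be a continuous t-norm and A ∈ [0,1]^{n×m}. The system max_j T(a_{ij}, x_j) = b_i (i = 1..n) is consistent if and only if the vector e defined by e_j = min_i I_T(a_{ij}, b_i) is a solution; moreover, when consistent, e is the greatest solution. -/
theorem stmt_8 {n m : ℕ} (T : ℝ → ℝ → ℝ)
    (hmem : ∀ x ∈ Set.Icc (0:ℝ) 1, ∀ y ∈ Set.Icc (0:ℝ) 1, T x y ∈ Set.Icc (0:ℝ) 1)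
    (hcomm : ∀ x y, T x y = T y x)
    (hassoc : ∀ x y z, T x (T y z) = T (T x y) z)
    (hmono : ∀ x y z, y ≤ z → T x y ≤ T x z)
    (hone : ∀ x, T x 1 = x)
    (hcont : ContinuousOn (fun p : ℝ × ℝ => T p.1 p.2) (Set.Icc 0 1 ×ˢ Set.Icc 0 1))
    (I : ℝ → ℝ → ℝ)
    (hI : ∀ a b, I a b = sSup {z : ℝ | z ∈ Set.Icc (0:ℝ) 1 ∧ T a z ≤ b})
    (A : Fin (n+1) → Fin (m+1) → ℝ)
    (hA : ∀ i j, A i j ∈ Set.Icc (0:ℝ) 1)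
    (F : (Fin (n+1) → ℝ) → Fin (n+1) → ℝ)
    (hF : ∀ c i, F c i = Finset.univ.sup' Finset.univ_nonempty (fun j : Fin (m+1) =>
        T (A i j) (Finset.univ.inf' Finset.univ_nonempty (fun k : Fin (n+1) => I (A k j) (c k)))))
    (b : Fin (n+1) → ℝ) (hb : ∀ i, b i ∈ Set.Icc (0:ℝ) 1)
    (e : Fin (m+1) → ℝ)
    (he : ∀ j, e j = Finset.univ.inf' Finset.univ_nonempty (fun i : Fin (n+1) => I (A i j) (b i))) :
    ((∃ x : Fin (m+1) → ℝ, (∀ j, x j ∈ Set.Icc (0:ℝ) 1) ∧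
        ∀ i, Finset.univ.sup' Finset.univ_nonempty (fun j => T (A i j) (x j)) = b i) ↔
      (∀ i, Finset.univ.sup' Finset.univ_nonempty (fun j => T (A i j) (e j)) = b i)) ∧
    (∀ x : Fin (m+1) → ℝ, (∀ j, x j ∈ Set.Icc (0:ℝ) 1) →
      (∀ i, Finset.univ.sup' Finset.univ_nonempty (fun j => T (A i j) (x j)) = b i) →
      ∀ j, x j ≤ e j) := by
  classical
  -- T a 0 = 0 for a ∈ [0,1]
  have hT0 : ∀ a ∈ Set.Icc (0:ℝ) 1, T a 0 = 0 := by
    intro a ha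
    have h1 : T a 0 ≤ 0 := by
      calc T a 0 = T 0 a := hcomm a 0
        _ ≤ T 0 1 := hmono 0 a 1 ha.2
        _ = 0 := hone 0
    have h2 : (0:ℝ) ≤ T a 0 := (hmem a ha 0 (by simp)).1
    linarith
  -- key: for a b ∈ [0,1], sSup of S belongs to S
  have key : ∀ a ∈ Set.Icc (0:ℝ) 1, ∀ c ∈ Set.Icc (0:ℝ) 1,
      I a c ∈ Set.Icc (0:ℝ) 1 ∧ T a (I a c) ≤ c ∧
      (∀ z ∈ Set.Icc (0:ℝ) 1, T a z ≤ c → z ≤ I a c) := by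
    intro a ha c hc
    set S : Set ℝ := {z : ℝ | z ∈ Set.Icc (0:ℝ) 1 ∧ T a z ≤ c} with hS
    have hne : S.Nonempty := ⟨0, ⟨by simp, by rw [hT0 a ha]; exact hc.1⟩⟩
    have hbdd : BddAbove S := ⟨1, fun z hz => hz.1.2⟩
    have hclosed : IsClosed S := by
      have hcl : ContinuousOn (fun z => T a z) (Set.Icc (0:ℝ) 1) := by
        have : ContinuousOn (fun z : ℝ => (a, z)) (Set.Icc (0:ℝ) 1) :=
          (continuous_const.prodMk continuous_id).continuousOn
        exact hcont.comp this (fun z hz => Set.mk_mem_prod ha hz)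
      have : S = Set.Icc (0:ℝ) 1 ∩ (fun z => T a z) ⁻¹' Set.Iic c := by
        ext z; simp [hS, Set.mem_setOf_eq, and_comm]
      rw [this]
      exact hcl.preimage_isClosed_of_isClosed isClosed_Icc isClosed_Iic
    have hmemS : sSup S ∈ S := hclosed.csSup_mem hne hbdd
    rw [hI]
    exact ⟨hmemS.1, hmemS.2, fun z hz hTz => le_csSup hbdd ⟨hz, hTz⟩⟩
  -- greatest-solution part
  have hgreat : ∀ x : Fin (m+1) → ℝ, (∀ j, x j ∈ Set.Icc (0:ℝ) 1) →
      (∀ i, Finset.univ.sup' Finset.univ_nonempty (fun j => T (A i j) (x j)) = b i) →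
      ∀ j, x j ≤ e j := by
    intro x hx hsol j
    rw [he]
    apply Finset.le_inf'
    intro i _
    have hTle : T (A i j) (x j) ≤ b i := by
      rw [← hsol i]
      exact Finset.le_sup' (fun j => T (A i j) (x j)) (Finset.mem_univ j)
    exact (key (A i j) (hA i j) (b i) (hb i)).2.2 (x j) (hx j) hTle
  -- e j ∈ [0,1]
  have hemem : ∀ j, e j ∈ Set.Icc (0:ℝ) 1 := by
    intro j
    rw [he]
    constructor
    · apply Finset.le_inf'
      intro i _
      exact (key (A i j) (hA i j) (b i) (hb i)).1.1
    · exact le_trans (Finset.inf'_le _ (Finset.mem_univ (0 : Fin (n+1))))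
        (key (A 0 j) (hA 0 j) (b 0) (hb 0)).1.2
  -- e j ≤ I (A i j) (b i)
  have heleI : ∀ i j, e j ≤ I (A i j) (b i) := by
    intro i j
    rw [he]
    exact Finset.inf'_le _ (Finset.mem_univ i)
  -- sup of T(a_ij, e_j) ≤ b i
  have hsuple : ∀ i, Finset.univ.sup' Finset.univ_nonempty (fun j => T (A i j) (e j)) ≤ b i := by
    intro i
    apply Finset.sup'_le
    intro j _
    calc T (A i j) (e j) ≤ T (A i j) (I (A i j) (b i)) := hmono _ _ _ (heleI i j)
      _ ≤ b i := (key (A i j) (hA i j) (b i) (hb i)).2.1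
  refine ⟨⟨?_, fun hsol => ⟨e, hemem, hsol⟩⟩, hgreat⟩
  rintro ⟨x, hx, hsol⟩ i
  refine le_antisymm (hsuple i) ?_
  rw [← hsol i]
  apply Finset.sup'_le
  intro j _
  exact le_trans (hmono _ _ _ (hgreat x hx hsol j)) (Finset.le_sup' (fun j => T (A i j) (e j)) (Finset.mem_univ j))
end

section
/- Let T be a continuous t-norm, A ∈ [0,1]^{n×m}, and F(c)_i = max_j T(a_{ij}, min_k I_T(a_{kj}, c_k)). Then F is idempotent: F(F(c)) = F(c) for all c ∈ [0,1]^n. -/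
theorem stmt_9 {n m : ℕ} (T : ℝ → ℝ → ℝ)
    (hmem : ∀ x ∈ Set.Icc (0:ℝ) 1, ∀ y ∈ Set.Icc (0:ℝ) 1, T x y ∈ Set.Icc (0:ℝ) 1)
    (hcomm : ∀ x y, T x y = T y x)
    (hassoc : ∀ x y z, T x (T y z) = T (T x y) z)
    (hmono : ∀ x y z, y ≤ z → T x y ≤ T x z)
    (hone : ∀ x, T x 1 = x)
    (hcont : ContinuousOn (fun p : ℝ × ℝ => T p.1 p.2) (Set.Icc 0 1 ×ˢ Set.Icc 0 1))
    (I : ℝ → ℝ → ℝ)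
    (hI : ∀ a b, I a b = sSup {z : ℝ | z ∈ Set.Icc (0:ℝ) 1 ∧ T a z ≤ b})
    (A : Fin (n+1) → Fin (m+1) → ℝ)
    (hA : ∀ i j, A i j ∈ Set.Icc (0:ℝ) 1)
    (F : (Fin (n+1) → ℝ) → Fin (n+1) → ℝ)
    (hF : ∀ c i, F c i = Finset.univ.sup' Finset.univ_nonempty (fun j : Fin (m+1) =>
        T (A i j) (Finset.univ.inf' Finset.univ_nonempty (fun k : Fin (n+1) => I (A k j) (c k)))))
    (c : Fin (n+1) → ℝ) (hc : ∀ i, c i ∈ Set.Icc (0:ℝ) 1) :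
    F (F c) = F c := by
  -- basic facts
  have hT0 : ∀ a ∈ Set.Icc (0:ℝ) 1, T a 0 = 0 := by
    intro a ha
    have h1 : T a 0 ≤ 0 := by
      calc T a 0 = T 0 a := hcomm a 0
        _ ≤ T 0 1 := hmono 0 a 1 ha.2
        _ = 0 := hone 0
    have h2 : 0 ≤ T a 0 := (hmem a ha 0 ⟨le_refl 0, zero_le_one⟩).1
    linarith
  -- properties of the set defining I
  set S : ℝ → ℝ → Set ℝ := fun a b => {z : ℝ | z ∈ Set.Icc (0:ℝ) 1 ∧ T a z ≤ b} with hS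
  have hSbdd : ∀ a b, BddAbove (S a b) := fun a b => ⟨1, fun z hz => hz.1.2⟩
  have hSne : ∀ a ∈ Set.Icc (0:ℝ) 1, ∀ b : ℝ, 0 ≤ b → (S a b).Nonempty := by
    intro a ha b hb
    exact ⟨0, ⟨le_refl 0, zero_le_one⟩, by rw [hT0 a ha]; exact hb⟩
  have hIle : ∀ a ∈ Set.Icc (0:ℝ) 1, ∀ b : ℝ, ∀ z ∈ Set.Icc (0:ℝ) 1, T a z ≤ b → z ≤ I a b := by
    intro a _ b z hz hTz
    rw [hI]
    exact le_csSup (hSbdd a b) ⟨hz, hTz⟩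
  have hInonneg : ∀ a ∈ Set.Icc (0:ℝ) 1, ∀ b : ℝ, 0 ≤ b → 0 ≤ I a b := by
    intro a ha b hb
    exact hIle a ha b 0 ⟨le_refl 0, zero_le_one⟩ (by rw [hT0 a ha]; exact hb)
  have hIle1 : ∀ a ∈ Set.Icc (0:ℝ) 1, ∀ b : ℝ, 0 ≤ b → I a b ≤ 1 := by
    intro a ha b hb
    rw [hI]
    exact csSup_le (hSne a ha b hb) (fun z hz => hz.1.2)
  have hImono : ∀ a : ℝ, a ∈ Set.Icc (0:ℝ) 1 → ∀ b b' : ℝ, 0 ≤ b → b ≤ b' → I a b ≤ I a b' := by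
    intro a ha b b' hb hbb'
    rw [hI, hI]
    exact csSup_le_csSup (hSbdd a b') (hSne a ha b hb)
      (fun z hz => ⟨hz.1, le_trans hz.2 hbb'⟩)
  -- the key residuation fact, needing continuity: T a (I a b) ≤ b
  have hkey : ∀ a ∈ Set.Icc (0:ℝ) 1, ∀ b : ℝ, 0 ≤ b → T a (I a b) ≤ b := by
    intro a ha b hb
    have hcontz : ContinuousOn (fun z => T a z) (Set.Icc (0:ℝ) 1) := by
      have : ContinuousOn ((fun p : ℝ × ℝ => T p.1 p.2) ∘ (fun z : ℝ => (a, z)))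
          (Set.Icc (0:ℝ) 1) :=
        hcont.comp ((continuous_const.prodMk continuous_id).continuousOn)
          (fun z hz => ⟨ha, hz⟩)
      exact this
    have hSeq : S a b = Set.Icc (0:ℝ) 1 ∩ (fun z => T a z) ⁻¹' Set.Iic b := by
      ext z; simp [hS, Set.mem_setOf_eq, Set.mem_preimage, Set.mem_Iic]
    have hclosed : IsClosed (S a b) := by
      rw [hSeq]
      exact hcontz.preimage_isClosed_of_isClosed isClosed_Icc isClosed_Iic
    have hmemS : sSup (S a b) ∈ S a b :=
      hclosed.csSup_mem (hSne a ha b hb) (hSbdd a b)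
    rw [hI]
    exact hmemS.2
  -- notation: the inner inf vector
  set h : Fin (m+1) → ℝ := fun j =>
    Finset.univ.inf' Finset.univ_nonempty (fun k : Fin (n+1) => I (A k j) (c k)) with hh
  have hc0 : ∀ k, (0:ℝ) ≤ c k := fun k => (hc k).1
  have hh01 : ∀ j, h j ∈ Set.Icc (0:ℝ) 1 := by
    intro j
    constructor
    · apply Finset.le_inf'
      intro k _
      exact hInonneg (A k j) (hA k j) (c k) (hc0 k)
    · exact le_trans (Finset.inf'_le _ (Finset.mem_univ 0))
        (hIle1 (A 0 j) (hA 0 j) (c 0) (hc0 0))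
  -- F c entries are in [0,1]
  have hFc01 : ∀ k, F c k ∈ Set.Icc (0:ℝ) 1 := by
    intro k
    rw [hF]
    constructor
    · refine le_trans ?_ (Finset.le_sup' _ (Finset.mem_univ 0))
      exact (hmem (A k 0) (hA k 0) (h 0) (hh01 0)).1
    · apply Finset.sup'_le
      intro j _
      exact (hmem (A k j) (hA k j) (h j) (hh01 j)).2
  -- F c ≤ c
  have hFcle : ∀ k, F c k ≤ c k := by
    intro k
    rw [hF]
    apply Finset.sup'_le
    intro j _
    calc T (A k j) (h j) ≤ T (A k j) (I (A k j) (c k)) := by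
          apply hmono
          exact Finset.inf'_le _ (Finset.mem_univ k)
      _ ≤ c k := hkey (A k j) (hA k j) (c k) (hc0 k)
  -- the inner inf of F c equals that of c
  have hinner : ∀ j : Fin (m+1),
      Finset.univ.inf' Finset.univ_nonempty (fun k : Fin (n+1) => I (A k j) (F c k)) = h j := by
    intro j
    apply le_antisymm
    · apply Finset.le_inf'
      intro k _
      refine le_trans (Finset.inf'_le _ (Finset.mem_univ k)) ?_
      exact hImono (A k j) (hA k j) (F c k) (c k) (hFc01 k).1 (hFcle k)
    · apply Finset.le_inf'
      intro k _
      apply hIle (A k j) (hA k j) (F c k) (h j) (hh01 j)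
      rw [hF]
      exact Finset.le_sup' (fun j' : Fin (m+1) => T (A k j')
        (Finset.univ.inf' Finset.univ_nonempty (fun k' : Fin (n+1) => I (A k' j') (c k'))))
        (Finset.mem_univ j)
  -- conclude
  funext i
  rw [hF (F c) i, hF c i]
  apply Finset.sup'_congr _ rfl
  intro j _
  rw [hinner j]
end

section
/- Let T be a continuous t-norm, A ∈ [0,1]^{n×m}, b ∈ [0,1]^n, and let C be the set of c ∈ [0,1]^n for which the system max_j T(a_{ij}, x_j) = c_i has a solution. Define Δ = inf_{c ∈ C} max_i |b_i - c_i|, ḇ(δ)_i = max(b_i - δ, 0), b̄(δ)_i = min(b_i + δ, 1), and F(c)_i = max_j T(a_{ij}, min_k I_T(a_{kj}, c_k)). Then Δ = min{δ ∈ [0,1] | ḇ(δ) ≤ F(b̄(δ)) componentwise}, and in particular this minimum is attained. -/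
theorem stmt_11 {n m : ℕ} (T : ℝ → ℝ → ℝ)
    (hmem : ∀ x ∈ Set.Icc (0:ℝ) 1, ∀ y ∈ Set.Icc (0:ℝ) 1, T x y ∈ Set.Icc (0:ℝ) 1)
    (hcomm : ∀ x y, T x y = T y x)
    (hassoc : ∀ x y z, T x (T y z) = T (T x y) z)
    (hmono : ∀ x y z, y ≤ z → T x y ≤ T x z)
    (hone : ∀ x, T x 1 = x)
    (hcont : ContinuousOn (fun p : ℝ × ℝ => T p.1 p.2) (Set.Icc 0 1 ×ˢ Set.Icc 0 1))
    (I : ℝ → ℝ → ℝ)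
    (hI : ∀ a b, I a b = sSup {z : ℝ | z ∈ Set.Icc (0:ℝ) 1 ∧ T a z ≤ b})
    (A : Fin (n+1) → Fin (m+1) → ℝ)
    (hA : ∀ i j, A i j ∈ Set.Icc (0:ℝ) 1)
    (F : (Fin (n+1) → ℝ) → Fin (n+1) → ℝ)
    (hF : ∀ c i, F c i = Finset.univ.sup' Finset.univ_nonempty (fun j : Fin (m+1) =>
        T (A i j) (Finset.univ.inf' Finset.univ_nonempty (fun k : Fin (n+1) => I (A k j) (c k)))))
    (b : Fin (n+1) → ℝ) (hb : ∀ i, b i ∈ Set.Icc (0:ℝ) 1)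
    (C : Set (Fin (n+1) → ℝ))
    (hC : C = {c : Fin (n+1) → ℝ | (∀ i, c i ∈ Set.Icc (0:ℝ) 1) ∧
      ∃ x : Fin (m+1) → ℝ, (∀ j, x j ∈ Set.Icc (0:ℝ) 1) ∧
        ∀ i, Finset.univ.sup' Finset.univ_nonempty (fun j => T (A i j) (x j)) = c i})
    (Δ : ℝ)
    (hΔ : Δ = sInf {d : ℝ | ∃ c ∈ C,
      d = Finset.univ.sup' Finset.univ_nonempty (fun i => |b i - c i|)})
    :
    IsLeast {δ : ℝ | δ ∈ Set.Icc (0:ℝ) 1 ∧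
      ∀ i, max (b i - δ) 0 ≤ F (fun k => min (b k + δ) 1) i} Δ := by
  classical
  -- basic facts about T
  have hT0 : ∀ a ∈ Set.Icc (0:ℝ) 1, T a 0 = 0 := by
    intro a ha
    have h1 : T a 0 = T 0 a := hcomm a 0
    have h2 : T 0 a ≤ T 0 1 := hmono 0 a 1 ha.2
    have h3 : T 0 1 = 0 := hone 0
    have h4 : (0:ℝ) ≤ T a 0 := (hmem a ha 0 (by norm_num)).1
    linarith [h1 ▸ (h2.trans_eq h3)]
  -- the set defining I
  set Z : ℝ → ℝ → Set ℝ := fun a c => {z : ℝ | z ∈ Set.Icc (0:ℝ) 1 ∧ T a z ≤ c} with hZ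
  have hZbdd : ∀ a c, BddAbove (Z a c) := fun a c => ⟨1, fun z hz => hz.1.2⟩
  have hZne : ∀ a ∈ Set.Icc (0:ℝ) 1, ∀ c : ℝ, 0 ≤ c → (0:ℝ) ∈ Z a c := by
    intro a ha c hc
    exact ⟨⟨le_refl 0, zero_le_one⟩, by rw [hT0 a ha]; exact hc⟩
  have hImem : ∀ a ∈ Set.Icc (0:ℝ) 1, ∀ c : ℝ, 0 ≤ c → I a c ∈ Set.Icc (0:ℝ) 1 := by
    intro a ha c hc
    rw [hI]
    constructor
    · exact le_csSup (hZbdd a c) (hZne a ha c hc)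
    · exact csSup_le ⟨0, hZne a ha c hc⟩ (fun z hz => hz.1.2)
  have hIub : ∀ a c z, z ∈ Set.Icc (0:ℝ) 1 → T a z ≤ c → z ≤ I a c := by
    intro a c z hz hT
    rw [hI]
    exact le_csSup (hZbdd a c) ⟨hz, hT⟩
  have hTcont1 : ∀ a ∈ Set.Icc (0:ℝ) 1, ContinuousOn (fun z => T a z) (Set.Icc (0:ℝ) 1) := by
    intro a ha
    have hc2 : Continuous (fun z : ℝ => (a, z)) := by continuity
    exact hcont.comp hc2.continuousOn (fun z hz => Set.mk_mem_prod ha hz)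
  have hIspec : ∀ a ∈ Set.Icc (0:ℝ) 1, ∀ c : ℝ, 0 ≤ c → T a (I a c) ≤ c := by
    intro a ha c hc
    have hclosed : IsClosed (Z a c) := by
      have heq : Z a c = Set.Icc (0:ℝ) 1 ∩ (fun z => T a z) ⁻¹' Set.Iic c := by
        ext z; simp [hZ, Set.mem_Iic]
      rw [heq]
      exact (hTcont1 a ha).preimage_isClosed_of_isClosed isClosed_Icc isClosed_Iic
    have hmemZ : sSup (Z a c) ∈ Z a c :=
      hclosed.csSup_mem ⟨0, hZne a ha c hc⟩ (hZbdd a c)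
    rw [hI]
    exact hmemZ.2
  have hImono : ∀ a ∈ Set.Icc (0:ℝ) 1, ∀ c c' : ℝ, 0 ≤ c → c ≤ c' → I a c ≤ I a c' := by
    intro a ha c c' hc hcc'
    rw [hI, hI]
    exact csSup_le_csSup (hZbdd a c') ⟨0, hZne a ha c hc⟩
      (fun z hz => ⟨hz.1, hz.2.trans hcc'⟩)
  -- the map g
  set g : (Fin (m+1) → ℝ) → Fin (n+1) → ℝ :=
    fun x i => Finset.univ.sup' Finset.univ_nonempty (fun j => T (A i j) (x j)) with hg
  have hgmem : ∀ x : Fin (m+1) → ℝ, (∀ j, x j ∈ Set.Icc (0:ℝ) 1) →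
      ∀ i, g x i ∈ Set.Icc (0:ℝ) 1 := by
    intro x hx i
    constructor
    · exact le_trans (hmem _ (hA i 0) _ (hx 0)).1
        (Finset.le_sup' (fun j => T (A i j) (x j)) (Finset.mem_univ 0))
    · exact Finset.sup'_le _ _ (fun j _ => (hmem _ (hA i j) _ (hx j)).2)
  have hgC : ∀ x : Fin (m+1) → ℝ, (∀ j, x j ∈ Set.Icc (0:ℝ) 1) → g x ∈ C := by
    intro x hx
    rw [hC]
    exact ⟨hgmem x hx, x, hx, fun i => rfl⟩
  -- xhat
  set xh : (Fin (n+1) → ℝ) → Fin (m+1) → ℝ :=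
    fun c j => Finset.univ.inf' Finset.univ_nonempty (fun k : Fin (n+1) => I (A k j) (c k))
    with hxh
  have hxhmem : ∀ c : Fin (n+1) → ℝ, (∀ k, c k ∈ Set.Icc (0:ℝ) 1) →
      ∀ j, xh c j ∈ Set.Icc (0:ℝ) 1 := by
    intro c hc j
    constructor
    · exact Finset.le_inf' _ _ (fun k _ => (hImem _ (hA k j) _ (hc k).1).1)
    · exact le_trans (Finset.inf'_le _ (Finset.mem_univ 0)) (hImem _ (hA 0 j) _ (hc 0).1).2
  have hFg : ∀ c, F c = g (xh c) := by
    intro c; funext i; rw [hF]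
  have hFle : ∀ c : Fin (n+1) → ℝ, (∀ k, 0 ≤ c k) → ∀ i, F c i ≤ c i := by
    intro c hc i
    rw [hF]
    apply Finset.sup'_le
    intro j _
    calc T (A i j) (Finset.univ.inf' Finset.univ_nonempty (fun k => I (A k j) (c k)))
        ≤ T (A i j) (I (A i j) (c i)) := hmono _ _ _ (Finset.inf'_le _ (Finset.mem_univ i))
      _ ≤ c i := hIspec _ (hA i j) _ (hc i)
  have hFmono : ∀ c c' : Fin (n+1) → ℝ, (∀ k, 0 ≤ c k) → (∀ k, c k ≤ c' k) →
      ∀ i, F c i ≤ F c' i := by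
    intro c c' hc hcc' i
    rw [hF, hF]
    apply Finset.sup'_le
    intro j _
    refine le_trans (hmono _ _ _ ?_) (Finset.le_sup'
      (fun j => T (A i j) (Finset.univ.inf' Finset.univ_nonempty
        (fun k => I (A k j) (c' k)))) (Finset.mem_univ j))
    apply Finset.le_inf'
    intro k _
    exact le_trans (Finset.inf'_le _ (Finset.mem_univ k))
      (hImono _ (hA k j) _ _ (hc k) (hcc' k))
  have hCleF : ∀ c ∈ C, ∀ i, c i ≤ F c i := by
    intro c hcC i
    rw [hC] at hcC
    obtain ⟨hcm, x, hx, hxc⟩ := hcC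
    rw [hF, ← hxc i]
    apply Finset.sup'_le
    intro j _
    have hxle : x j ≤ Finset.univ.inf' Finset.univ_nonempty (fun k => I (A k j) (c k)) := by
      apply Finset.le_inf'
      intro k _
      have hTx : T (A k j) (x j) ≤ c k := by
        rw [← hxc k]
        exact Finset.le_sup' (fun j => T (A k j) (x j)) (Finset.mem_univ j)
      exact hIub _ _ _ (hx j) hTx
    exact le_trans (hmono _ _ _ hxle) (Finset.le_sup'
      (fun j => T (A i j) (Finset.univ.inf' Finset.univ_nonempty
        (fun k => I (A k j) (c k)))) (Finset.mem_univ j))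
  have hCmem : ∀ c ∈ C, ∀ i, c i ∈ Set.Icc (0:ℝ) 1 := by
    intro c hcC
    rw [hC] at hcC
    exact hcC.1
  -- key direction 1: a nearby solvable c puts δ in the target set
  have key1 : ∀ δ : ℝ, δ ∈ Set.Icc (0:ℝ) 1 → ∀ c ∈ C, (∀ i, |b i - c i| ≤ δ) →
      ∀ i, max (b i - δ) 0 ≤ F (fun k => min (b k + δ) 1) i := by
    intro δ hδ c hcC hnear i
    have h1 : max (b i - δ) 0 ≤ c i := by
      apply max_le
      · have := (abs_le.1 (hnear i)).2; linarith
      · exact (hCmem c hcC i).1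
    have h2 : c i ≤ F c i := hCleF c hcC i
    have h3 : F c i ≤ F (fun k => min (b k + δ) 1) i := by
      apply hFmono
      · intro k; exact (hCmem c hcC k).1
      · intro k
        apply le_min
        · have := (abs_le.1 (hnear k)).1; linarith
        · exact (hCmem c hcC k).2
    linarith
  -- key direction 2: δ in the target set yields a nearby solvable c
  have key2 : ∀ δ : ℝ, δ ∈ Set.Icc (0:ℝ) 1 →
      (∀ i, max (b i - δ) 0 ≤ F (fun k => min (b k + δ) 1) i) →
      ∃ c ∈ C, ∀ i, |b i - c i| ≤ δ := by
    intro δ hδ hcond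
    set bu : Fin (n+1) → ℝ := fun k => min (b k + δ) 1 with hbu
    have hbum : ∀ k, bu k ∈ Set.Icc (0:ℝ) 1 := by
      intro k
      constructor
      · apply le_min
        · have := (hb k).1; have := hδ.1; linarith
        · norm_num
      · exact min_le_right _ _
    refine ⟨F bu, ?_, ?_⟩
    · rw [hFg]
      exact hgC _ (hxhmem bu hbum)
    · intro i
      rw [abs_le]
      constructor
      · have h1 : F bu i ≤ bu i := hFle bu (fun k => (hbum k).1) i
        have h2 : bu i ≤ b i + δ := min_le_left _ _
        linarith
      · have h1 : b i - δ ≤ max (b i - δ) 0 := le_max_left _ _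
        have h2 := hcond i
        linarith
  -- facts about D
  set D : Set ℝ := {d : ℝ | ∃ c ∈ C,
      d = Finset.univ.sup' Finset.univ_nonempty (fun i => |b i - c i|)} with hD
  have hDlb : ∀ d ∈ D, (0:ℝ) ≤ d := by
    rintro d ⟨c, hcC, rfl⟩
    exact le_trans (abs_nonneg _) (Finset.le_sup' (fun i => |b i - c i|) (Finset.mem_univ 0))
  have hDbdd : BddBelow D := ⟨0, hDlb⟩
  -- compactness: minimizer exists
  set cube : Set (Fin (m+1) → ℝ) := Set.pi Set.univ (fun _ => Set.Icc (0:ℝ) 1) with hcube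
  have hcubemem : ∀ x : Fin (m+1) → ℝ, x ∈ cube ↔ ∀ j, x j ∈ Set.Icc (0:ℝ) 1 := by
    intro x
    constructor
    · intro hx j; exact hx j (Set.mem_univ j)
    · intro hx j _; exact hx j
  have hKcomp : IsCompact (g '' cube) := by
    apply IsCompact.image_of_continuousOn (isCompact_univ_pi (fun _ => isCompact_Icc))
    rw [hg]
    apply continuousOn_pi.2
    intro i
    apply ContinuousOn.finset_sup'_apply Finset.univ_nonempty
    intro j _
    have hc2 : Continuous (fun x : Fin (m+1) → ℝ => (A i j, x j)) :=
      continuous_const.prodMk (continuous_apply j)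
    exact hcont.comp hc2.continuousOn
      (fun x hx => Set.mk_mem_prod (hA i j) ((hcubemem x).1 hx j))
  have hKne : (g '' cube).Nonempty := by
    refine ⟨g 0, 0, ?_, rfl⟩
    rw [hcubemem]
    intro j
    constructor <;> norm_num
  set f : (Fin (n+1) → ℝ) → ℝ :=
    fun c => Finset.univ.sup' Finset.univ_nonempty (fun i => |b i - c i|) with hf
  have hfcont : ContinuousOn f (g '' cube) := by
    rw [hf]
    apply ContinuousOn.finset_sup'_apply Finset.univ_nonempty
    intro i _
    exact ((continuous_const.sub (continuous_apply i)).abs).continuousOn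
  obtain ⟨cs, hcsK, hmin⟩ := hKcomp.exists_isMinOn hKne hfcont
  have hKC : ∀ c, c ∈ g '' cube ↔ c ∈ C := by
    intro c
    constructor
    · rintro ⟨x, hx, rfl⟩
      exact hgC x ((hcubemem x).1 hx)
    · intro hcC
      rw [hC] at hcC
      obtain ⟨hcm, x, hx, hxc⟩ := hcC
      exact ⟨x, (hcubemem x).2 hx, funext hxc⟩
  have hcsC : cs ∈ C := (hKC cs).1 hcsK
  have hΔeq : Δ = f cs := by
    rw [hΔ]
    apply le_antisymm
    · exact csInf_le hDbdd ⟨cs, hcsC, rfl⟩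
    · refine le_csInf ⟨f cs, ⟨cs, hcsC, by rfl⟩⟩ ?_
      rintro d ⟨c, hcC, rfl⟩
      exact isMinOn_iff.1 hmin c ((hKC c).2 hcC)
  have hΔIcc : Δ ∈ Set.Icc (0:ℝ) 1 := by
    rw [hΔeq]
    constructor
    · exact le_trans (abs_nonneg _) (Finset.le_sup' (fun i => |b i - cs i|) (Finset.mem_univ 0))
    · show Finset.univ.sup' Finset.univ_nonempty (fun i => |b i - cs i|) ≤ 1
      apply Finset.sup'_le
      intro i _
      have h1 := hb i
      have h2 := hCmem cs hcsC i
      rw [abs_le]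
      constructor
      · simp only [Set.mem_Icc] at h1 h2; linarith
      · simp only [Set.mem_Icc] at h1 h2; linarith
  constructor
  · refine ⟨hΔIcc, ?_⟩
    apply key1 Δ hΔIcc cs hcsC
    intro i
    rw [hΔeq]
    exact Finset.le_sup' (fun i => |b i - cs i|) (Finset.mem_univ i)
  · intro δ hδ
    obtain ⟨hδIcc, hcond⟩ := hδ
    obtain ⟨c, hcC, hnear⟩ := key2 δ hδIcc hcond
    rw [hΔ]
    refine le_trans (csInf_le hDbdd ⟨c, hcC, rfl⟩) ?_
    exact Finset.sup'_le _ _ (fun i _ => hnear i)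
end

section
/- With the notation of the Chebyshev distance Δ = min{δ | ḇ(δ) ≤ F(b̄(δ))}, the vector F(b̄(Δ)) belongs to C, satisfies ‖b − F(b̄(Δ))‖_∞ = Δ, and is the greatest element of the set C_b = {c ∈ C | ‖b − c‖_∞ = Δ} of Chebyshev approximations of b. -/
/-!
For `c ≥ 0`, `F c = A ∘ x̂(c)` is the greatest element of `C` below `c`, because
`x̂(c)_j = min_k I_T(a_kj, c_k)` is the greatest solution of `A ∘ x ≤ c`. An element of `C` at
distance `≤ δ` from `b` lies above `ḇ(δ)` and below `b̄(δ)`, hence below `F(b̄(δ))`; so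
`ḇ(δ) ≤ F(b̄(δ))` for every `δ > Δ`. For a continuous t-norm, `I_T(a, ·)` is right-continuous,
hence so is `δ ↦ F(b̄(δ))`, and the inequality persists at `δ = Δ`. With `F(b̄(Δ)) ≤ b̄(Δ)` this
puts `F(b̄(Δ))` at distance exactly `Δ` from `b`, above every other element of `C` at distance `Δ`.
-/

open Set Filter Topology

noncomputable def residuum (T : ℝ → ℝ → ℝ) (a u : ℝ) : ℝ :=
  sSup {z | z ∈ Icc (0:ℝ) 1 ∧ T a z ≤ u}

section Residuum

variable {T : ℝ → ℝ → ℝ} {a u v z : ℝ}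

lemma residuum_set_nonempty (h0 : T a 0 ≤ u) : {z | z ∈ Icc (0:ℝ) 1 ∧ T a z ≤ u}.Nonempty :=
  ⟨0, left_mem_Icc.2 zero_le_one, h0⟩

lemma residuum_set_bddAbove : BddAbove {z | z ∈ Icc (0:ℝ) 1 ∧ T a z ≤ u} :=
  ⟨1, fun _ hz => hz.1.2⟩

lemma le_residuum (hz : z ∈ Icc 0 1) (h : T a z ≤ u) : z ≤ residuum T a u :=
  le_csSup residuum_set_bddAbove ⟨hz, h⟩

lemma residuum_mem_Icc (h0 : T a 0 ≤ u) : residuum T a u ∈ Icc 0 1 :=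
  ⟨le_residuum (left_mem_Icc.2 zero_le_one) h0,
    csSup_le (residuum_set_nonempty h0) fun _ hz => hz.1.2⟩

lemma residuum_mono (h0 : T a 0 ≤ u) (huv : u ≤ v) : residuum T a u ≤ residuum T a v :=
  csSup_le_csSup residuum_set_bddAbove (residuum_set_nonempty h0)
    fun _ hz => ⟨hz.1, hz.2.trans huv⟩

lemma apply_residuum_le (hcont : ContinuousOn (T a) (Icc 0 1)) (h0 : T a 0 ≤ u) :
    T a (residuum T a u) ≤ u :=
  have hclosed : IsClosed {z | z ∈ Icc (0:ℝ) 1 ∧ T a z ≤ u} :=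
    hcont.preimage_isClosed_of_isClosed isClosed_Icc isClosed_Iic
  (hclosed.csSup_mem (residuum_set_nonempty h0) residuum_set_bddAbove).2

lemma continuousWithinAt_residuum (hmono : Monotone (T a))
    (hcont : ContinuousOn (T a) (Icc 0 1)) (h0 : T a 0 ≤ u) :
    ContinuousWithinAt (residuum T a) (Ici u) u := by
  have hmonoOn : MonotoneOn (residuum T a) (Ioi u) := fun v hv w _ hvw =>
    residuum_mono (h0.trans hv.le) hvw
  have hbdd : BddBelow (residuum T a '' Ioi u) :=
    ⟨0, by rintro _ ⟨v, hv, rfl⟩; exact (residuum_mem_Icc (h0.trans hv.le)).1⟩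
  have hne : (residuum T a '' Ioi u).Nonempty := (nonempty_Ioi (a := u)).image _
  set r := sInf (residuum T a '' Ioi u)
  have hr : r ∈ Icc 0 1 :=
    ⟨le_csInf hne fun _ ⟨v, hv, hvz⟩ => hvz ▸ (residuum_mem_Icc (h0.trans hv.le)).1,
      (csInf_le hbdd ⟨u + 1, by simp, rfl⟩).trans (residuum_mem_Icc (by linarith)).2⟩
  have hlim : r = residuum T a u := by
    refine le_antisymm (le_residuum hr (le_of_forall_gt_imp_ge_of_dense fun v hv => ?_)) ?_
    · calc T a r ≤ T a (residuum T a v) := hmono (csInf_le hbdd ⟨v, hv, rfl⟩)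
        _ ≤ v := apply_residuum_le hcont (h0.trans hv.le)
    · exact le_csInf hne fun _ ⟨v, hv, hvz⟩ => hvz ▸ residuum_mono h0 hv.le
  rw [← continuousWithinAt_Ioi_iff_Ici, ContinuousWithinAt, ← hlim]
  exact hmonoOn.tendsto_nhdsGT hbdd

end Residuum

section MaxTSystem

variable {ι κ : Type*}

noncomputable def maxTProduct [Fintype κ] [Nonempty κ] (T : ℝ → ℝ → ℝ) (A : ι → κ → ℝ)
    (x : κ → ℝ) (i : ι) : ℝ :=
  Finset.univ.sup' Finset.univ_nonempty fun j => T (A i j) (x j)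

noncomputable def residualSolution [Fintype ι] [Nonempty ι] (T : ℝ → ℝ → ℝ) (A : ι → κ → ℝ)
    (c : ι → ℝ) (j : κ) : ℝ :=
  Finset.univ.inf' Finset.univ_nonempty fun k => residuum T (A k j) (c k)

def consistentRHS [Fintype κ] [Nonempty κ] (T : ℝ → ℝ → ℝ) (A : ι → κ → ℝ) : Set (ι → ℝ) :=
  {c | (∀ i, c i ∈ Icc 0 1) ∧ ∃ x : κ → ℝ, (∀ j, x j ∈ Icc 0 1) ∧ maxTProduct T A x = c}

variable {T : ℝ → ℝ → ℝ} {A : ι → κ → ℝ}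

lemma maxTProduct_mono [Fintype κ] [Nonempty κ] (hmono : ∀ a, Monotone (T a)) :
    Monotone (maxTProduct T A) := fun _ _ hxy _ =>
  Finset.sup'_mono_fun fun j _ => hmono _ (hxy j)

lemma maxTProduct_mem_Icc [Fintype κ] [Nonempty κ]
    (hmem : ∀ a ∈ Icc (0:ℝ) 1, ∀ z ∈ Icc (0:ℝ) 1, T a z ∈ Icc 0 1)
    (hA : ∀ i j, A i j ∈ Icc 0 1) {x : κ → ℝ} (hx : ∀ j, x j ∈ Icc 0 1) (i : ι) :
    maxTProduct T A x i ∈ Icc 0 1 :=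
  ⟨Finset.le_sup'_of_le _ (Finset.mem_univ (Classical.arbitrary κ)) (hmem _ (hA _ _) _ (hx _)).1,
    Finset.sup'_le _ _ fun j _ => (hmem _ (hA i j) _ (hx j)).2⟩

lemma residualSolution_mem_Icc [Fintype ι] [Nonempty ι] (hA : ∀ i j, A i j ∈ Icc 0 1)
    (hT0 : ∀ a ∈ Icc (0:ℝ) 1, T a 0 = 0) {c : ι → ℝ} (hc : 0 ≤ c) (j : κ) :
    residualSolution T A c j ∈ Icc 0 1 :=
  have hres k := residuum_mem_Icc (T := T) (a := A k j) ((hT0 _ (hA k j)).trans_le (hc k))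
  ⟨Finset.le_inf' _ _ fun k _ => (hres k).1,
    (Finset.inf'_le _ (Finset.mem_univ (Classical.arbitrary ι))).trans (hres _).2⟩

lemma le_residualSolution [Fintype ι] [Nonempty ι] [Fintype κ] [Nonempty κ] {x : κ → ℝ} {c : ι → ℝ}
    (hx : ∀ j, x j ∈ Icc 0 1) (h : maxTProduct T A x ≤ c) : x ≤ residualSolution T A c :=
  fun j => Finset.le_inf' _ _ fun k _ =>
    le_residuum (hx j) ((Finset.le_sup' (fun j => T (A k j) (x j)) (Finset.mem_univ j)).trans (h k))

lemma maxTProduct_residualSolution_le [Fintype ι] [Nonempty ι] [Fintype κ] [Nonempty κ]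
    (hmono : ∀ a, Monotone (T a))
    (hcont : ∀ a ∈ Icc (0:ℝ) 1, ContinuousOn (T a) (Icc 0 1)) (hA : ∀ i j, A i j ∈ Icc 0 1)
    (hT0 : ∀ a ∈ Icc (0:ℝ) 1, T a 0 = 0) {c : ι → ℝ} (hc : 0 ≤ c) :
    maxTProduct T A (residualSolution T A c) ≤ c := fun i =>
  Finset.sup'_le _ _ fun j _ =>
    calc T (A i j) (residualSolution T A c j) ≤ T (A i j) (residuum T (A i j) (c i)) :=
          hmono _ (Finset.inf'_le _ (Finset.mem_univ i))
      _ ≤ c i := apply_residuum_le (hcont _ (hA i j)) ((hT0 _ (hA i j)).trans_le (hc i))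

lemma isGreatest_maxTProduct_residualSolution [Fintype ι] [Nonempty ι] [Fintype κ] [Nonempty κ]
    (hmem : ∀ a ∈ Icc (0:ℝ) 1, ∀ z ∈ Icc (0:ℝ) 1, T a z ∈ Icc 0 1) (hmono : ∀ a, Monotone (T a))
    (hcont : ∀ a ∈ Icc (0:ℝ) 1, ContinuousOn (T a) (Icc 0 1)) (hA : ∀ i j, A i j ∈ Icc 0 1)
    (hT0 : ∀ a ∈ Icc (0:ℝ) 1, T a 0 = 0) {c : ι → ℝ} (hc : 0 ≤ c) :
    IsGreatest {c' | c' ∈ consistentRHS T A ∧ c' ≤ c}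
      (maxTProduct T A (residualSolution T A c)) := by
  have hx := residualSolution_mem_Icc hA hT0 hc
  refine ⟨⟨⟨maxTProduct_mem_Icc hmem hA hx, _, hx, rfl⟩,
    maxTProduct_residualSolution_le hmono hcont hA hT0 hc⟩, ?_⟩
  rintro _ ⟨⟨-, x, hx, rfl⟩, hxc⟩
  exact maxTProduct_mono hmono (le_residualSolution hx hxc)

lemma continuousWithinAt_maxTProduct_residualSolution
    [Fintype ι] [Nonempty ι] [Fintype κ] [Nonempty κ]
    (hmono : ∀ a, Monotone (T a)) (hcont : ∀ a ∈ Icc (0:ℝ) 1, ContinuousOn (T a) (Icc 0 1))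
    (hA : ∀ i j, A i j ∈ Icc 0 1) (hT0 : ∀ a ∈ Icc (0:ℝ) 1, T a 0 = 0) {c : ι → ℝ} (hc : 0 ≤ c) :
    ContinuousWithinAt (fun c => maxTProduct T A (residualSolution T A c)) (Ici c) c := by
  have hsol (j : κ) : ContinuousWithinAt (residualSolution T A · j) (Ici c) c := by
    unfold residualSolution
    refine ContinuousWithinAt.finset_inf'_apply _ fun k _ => ?_
    have hres := continuousWithinAt_residuum (hmono (A k j)) (hcont _ (hA k j))
      ((hT0 _ (hA k j)).trans_le (hc k))
    exact hres.comp (f := fun c' : ι → ℝ => c' k) (continuous_apply k).continuousWithinAt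
      fun _ hc' => hc' k
  refine continuousWithinAt_pi.2 fun i => ContinuousWithinAt.finset_sup'_apply _ fun j _ => ?_
  have hT := (hcont _ (hA i j)).continuousWithinAt (residualSolution_mem_Icc hA hT0 hc j)
  exact hT.comp (x := c) (hsol j) fun c' hc' => residualSolution_mem_Icc hA hT0 (hc.trans hc') j

end MaxTSystem

section Chebyshev

variable {ι : Type*}

noncomputable def supDist [Fintype ι] [Nonempty ι] (b c : ι → ℝ) : ℝ :=
  Finset.univ.sup' Finset.univ_nonempty fun i => |b i - c i|

noncomputable def upperShift (b : ι → ℝ) (δ : ℝ) : ι → ℝ := fun k => min (b k + δ) 1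

lemma supDist_le_iff [Fintype ι] [Nonempty ι] {b c : ι → ℝ} {δ : ℝ} :
    supDist b c ≤ δ ↔ ∀ i, |b i - c i| ≤ δ := by
  simp [supDist]

lemma supDist_nonneg [Fintype ι] [Nonempty ι] (b c : ι → ℝ) : 0 ≤ supDist b c :=
  Finset.le_sup'_of_le _ (Finset.mem_univ (Classical.arbitrary ι)) (abs_nonneg _)

lemma sub_le_of_supDist_le [Fintype ι] [Nonempty ι] {b c : ι → ℝ} {δ : ℝ}
    (h : supDist b c ≤ δ) (i : ι) : b i - δ ≤ c i := by
  linarith [(abs_le.1 (supDist_le_iff.1 h i)).2]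

lemma le_upperShift_of_supDist_le [Fintype ι] [Nonempty ι] {b c : ι → ℝ} {δ : ℝ}
    (hc : c ≤ 1) (h : supDist b c ≤ δ) : c ≤ upperShift b δ := fun k =>
  le_min (by linarith [(abs_le.1 (supDist_le_iff.1 h k)).1]) (hc k)

lemma upperShift_nonneg {b : ι → ℝ} (hb : 0 ≤ b) {δ : ℝ} (hδ : 0 ≤ δ) : 0 ≤ upperShift b δ :=
  fun k => le_min (add_nonneg (hb k) hδ) zero_le_one

lemma monotone_upperShift (b : ι → ℝ) : Monotone (upperShift b) := fun _ _ h k =>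
  min_le_min_right 1 (add_le_add_right h (b k))

lemma continuous_upperShift (b : ι → ℝ) : Continuous (upperShift b) :=
  continuous_pi fun _ => (continuous_const.add continuous_id).min continuous_const

theorem isGreatest_supDist_eq_of_isGreatest_le [Fintype ι] [Nonempty ι] {C : Set (ι → ℝ)}
    {F : (ι → ℝ) → ι → ℝ} (hC : ∀ c ∈ C, c ≤ 1)
    (hF : ∀ c, 0 ≤ c → IsGreatest {c' | c' ∈ C ∧ c' ≤ c} (F c))
    (hFcont : ∀ c, 0 ≤ c → ContinuousWithinAt F (Ici c) c) {b : ι → ℝ} (hb : 0 ≤ b) {Δ : ℝ}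
    (hΔ : Δ = sInf {d | ∃ c ∈ C, d = supDist b c}) :
    IsGreatest {c | c ∈ C ∧ supDist b c = Δ} (F (upperShift b Δ)) := by
  set D := {d | ∃ c ∈ C, d = supDist b c}
  have hD : D.Nonempty := ⟨_, F b, (hF b hb).1.1, rfl⟩
  have hD0 : ∀ d ∈ D, 0 ≤ d := by
    rintro _ ⟨c, -, rfl⟩
    exact supDist_nonneg b c
  have hΔ0 : 0 ≤ Δ := hΔ ▸ le_csInf hD hD0
  have hbelow : ∀ c ∈ C, ∀ δ, 0 ≤ δ → supDist b c ≤ δ → c ≤ F (upperShift b δ) :=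
    fun c hc δ hδ h => (hF _ (upperShift_nonneg hb hδ)).2
      ⟨hc, le_upperShift_of_supDist_le (hC c hc) h⟩
  have hFΔ := hF _ (upperShift_nonneg hb hΔ0)
  have hlower (i : ι) : b i - Δ ≤ F (upperShift b Δ) i := by
    have hcont : ContinuousWithinAt (fun δ => F (upperShift b δ) i + δ) (Ioi Δ) Δ := by
      have hshift := (continuous_upperShift b).continuousWithinAt (s := Ici Δ) (x := Δ)
      have hF' := (hFcont _ (upperShift_nonneg hb hΔ0)).comp hshift
        fun _ hδ => monotone_upperShift b hδ
      exact (((continuous_apply i).continuousAt.comp_continuousWithinAt hF').add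
        continuousWithinAt_id).mono Ioi_subset_Ici_self
    refine sub_le_iff_le_add.2 (ge_of_tendsto hcont.tendsto
      (eventually_nhdsWithin_of_forall fun δ (hδ : Δ < δ) => ?_))
    obtain ⟨_, ⟨c, hc, rfl⟩, hlt⟩ := exists_lt_of_csInf_lt hD (hΔ ▸ hδ)
    linarith [sub_le_of_supDist_le hlt.le i, hbelow c hc δ (hΔ0.trans hδ.le) hlt.le i]
  have hdist : supDist b (F (upperShift b Δ)) = Δ := by
    refine le_antisymm (supDist_le_iff.2 fun i => abs_le.2 ⟨?_, by linarith [hlower i]⟩)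
      (hΔ.trans_le (csInf_le ⟨0, hD0⟩ ⟨_, hFΔ.1.1, rfl⟩))
    have hshift : upperShift b Δ i ≤ b i + Δ := min_le_left _ _
    linarith [hFΔ.1.2 i]
  exact ⟨⟨hFΔ.1.1, hdist⟩, fun c ⟨hc, hcd⟩ => hbelow c hc Δ hΔ0 hcd.le⟩

end Chebyshev

theorem stmt_12_general {n m : ℕ} (T : ℝ → ℝ → ℝ)
    (hmem : ∀ x ∈ Set.Icc (0:ℝ) 1, ∀ y ∈ Set.Icc (0:ℝ) 1, T x y ∈ Set.Icc (0:ℝ) 1)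
    (hcomm : ∀ x y, T x y = T y x)
    (hmono : ∀ x y z, y ≤ z → T x y ≤ T x z)
    (hone : ∀ x, T x 1 = x)
    (hcont : ContinuousOn (fun p : ℝ × ℝ => T p.1 p.2) (Set.Icc 0 1 ×ˢ Set.Icc 0 1))
    (I : ℝ → ℝ → ℝ)
    (hI : ∀ a b, I a b = sSup {z : ℝ | z ∈ Set.Icc (0:ℝ) 1 ∧ T a z ≤ b})
    (A : Fin (n+1) → Fin (m+1) → ℝ)
    (hA : ∀ i j, A i j ∈ Set.Icc (0:ℝ) 1)
    (F : (Fin (n+1) → ℝ) → Fin (n+1) → ℝ)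
    (hF : ∀ c i, F c i = Finset.univ.sup' Finset.univ_nonempty (fun j : Fin (m+1) =>
        T (A i j) (Finset.univ.inf' Finset.univ_nonempty (fun k : Fin (n+1) => I (A k j) (c k)))))
    (b : Fin (n+1) → ℝ) (hb : ∀ i, b i ∈ Set.Icc (0:ℝ) 1)
    (C : Set (Fin (n+1) → ℝ))
    (hC : C = {c : Fin (n+1) → ℝ | (∀ i, c i ∈ Set.Icc (0:ℝ) 1) ∧
      ∃ x : Fin (m+1) → ℝ, (∀ j, x j ∈ Set.Icc (0:ℝ) 1) ∧
        ∀ i, Finset.univ.sup' Finset.univ_nonempty (fun j => T (A i j) (x j)) = c i})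
    (Δ : ℝ)
    (hΔ : Δ = sInf {d : ℝ | ∃ c ∈ C,
      d = Finset.univ.sup' Finset.univ_nonempty (fun i => |b i - c i|)})
    :
    IsGreatest {c : Fin (n+1) → ℝ | c ∈ C ∧
        Finset.univ.sup' Finset.univ_nonempty (fun i => |b i - c i|) = Δ}
      (F (fun k => min (b k + Δ) 1)) := by
  have hTmono (a : ℝ) : Monotone (T a) := hmono a
  have hT0 (a : ℝ) (ha : a ∈ Icc (0:ℝ) 1) : T a 0 = 0 :=
    le_antisymm ((hcomm a 0).trans_le ((hmono 0 a 1 ha.2).trans_eq (hone 0)))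
      (hmem a ha 0 (left_mem_Icc.2 zero_le_one)).1
  have hTcont (a : ℝ) (ha : a ∈ Icc (0:ℝ) 1) : ContinuousOn (T a) (Icc 0 1) :=
    hcont.comp (f := fun z => (a, z)) (by fun_prop) fun _ hz => ⟨ha, hz⟩
  obtain rfl : I = residuum T := funext₂ hI
  obtain rfl : F = fun c => maxTProduct T A (residualSolution T A c) := funext₂ hF
  obtain rfl : C = consistentRHS T A := by
    simp only [hC, consistentRHS, funext_iff, maxTProduct]
  exact isGreatest_supDist_eq_of_isGreatest_le (fun c hc i => (hc.1 i).2)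
    (fun c hc => isGreatest_maxTProduct_residualSolution hmem hTmono hTcont hA hT0 hc)
    (fun c hc => continuousWithinAt_maxTProduct_residualSolution hTmono hTcont hA hT0 hc)
    (fun i => (hb i).1) hΔ

theorem stmt_12 {n m : ℕ} (T : ℝ → ℝ → ℝ)
    (hmem : ∀ x ∈ Set.Icc (0:ℝ) 1, ∀ y ∈ Set.Icc (0:ℝ) 1, T x y ∈ Set.Icc (0:ℝ) 1)
    (hcomm : ∀ x y, T x y = T y x)
    (hassoc : ∀ x y z, T x (T y z) = T (T x y) z)
    (hmono : ∀ x y z, y ≤ z → T x y ≤ T x z)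
    (hone : ∀ x, T x 1 = x)
    (hcont : ContinuousOn (fun p : ℝ × ℝ => T p.1 p.2) (Set.Icc 0 1 ×ˢ Set.Icc 0 1))
    (I : ℝ → ℝ → ℝ)
    (hI : ∀ a b, I a b = sSup {z : ℝ | z ∈ Set.Icc (0:ℝ) 1 ∧ T a z ≤ b})
    (A : Fin (n+1) → Fin (m+1) → ℝ)
    (hA : ∀ i j, A i j ∈ Set.Icc (0:ℝ) 1)
    (F : (Fin (n+1) → ℝ) → Fin (n+1) → ℝ)
    (hF : ∀ c i, F c i = Finset.univ.sup' Finset.univ_nonempty (fun j : Fin (m+1) =>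
        T (A i j) (Finset.univ.inf' Finset.univ_nonempty (fun k : Fin (n+1) => I (A k j) (c k)))))
    (b : Fin (n+1) → ℝ) (hb : ∀ i, b i ∈ Set.Icc (0:ℝ) 1)
    (C : Set (Fin (n+1) → ℝ))
    (hC : C = {c : Fin (n+1) → ℝ | (∀ i, c i ∈ Set.Icc (0:ℝ) 1) ∧
      ∃ x : Fin (m+1) → ℝ, (∀ j, x j ∈ Set.Icc (0:ℝ) 1) ∧
        ∀ i, Finset.univ.sup' Finset.univ_nonempty (fun j => T (A i j) (x j)) = c i})
    (Δ : ℝ)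
    (hΔ : Δ = sInf {d : ℝ | ∃ c ∈ C,
      d = Finset.univ.sup' Finset.univ_nonempty (fun i => |b i - c i|)})
    :
    IsGreatest {c : Fin (n+1) → ℝ | c ∈ C ∧
        Finset.univ.sup' Finset.univ_nonempty (fun i => |b i - c i|) = Δ}
      (F (fun k => min (b k + Δ) 1)) :=
  stmt_12_general T hmem hcomm hmono hone hcont I hI A hA F hF b hb C hC Δ hΔ
end

section
/- With C the set of consistent second members and Δ = inf_{c ∈ C} ‖b − c‖_∞, the infimum is attained: Δ = min_{c ∈ C} ‖b − c‖_∞; and Δ = 0 if and only if the system max_j T(a_{ij}, x_j) = b_i is consistent. -/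
private lemma contOn_sup' {α : Type*} [TopologicalSpace α] {ι : Type*} {s : Finset ι}
    (hs : s.Nonempty) {f : ι → α → ℝ} {U : Set α}
    (hf : ∀ i ∈ s, ContinuousOn (f i) U) :
    ContinuousOn (fun x => s.sup' hs (fun i => f i x)) U := by
  induction hs using Finset.Nonempty.cons_induction with
  | singleton i =>
    simp only [Finset.sup'_singleton]
    exact hf i (Finset.mem_singleton_self i)
  | cons i s hi hs ih =>
    simp only [Finset.sup'_cons hs]
    exact (hf i (by simp)).sup (ih (fun j hj => hf j (by simp [hj])))

theorem stmt_13 {n m : ℕ} (T : ℝ → ℝ → ℝ)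
    (hmem : ∀ x ∈ Set.Icc (0:ℝ) 1, ∀ y ∈ Set.Icc (0:ℝ) 1, T x y ∈ Set.Icc (0:ℝ) 1)
    (hcomm : ∀ x y, T x y = T y x)
    (hassoc : ∀ x y z, T x (T y z) = T (T x y) z)
    (hmono : ∀ x y z, y ≤ z → T x y ≤ T x z)
    (hone : ∀ x, T x 1 = x)
    (hcont : ContinuousOn (fun p : ℝ × ℝ => T p.1 p.2) (Set.Icc 0 1 ×ˢ Set.Icc 0 1))
    (I : ℝ → ℝ → ℝ)
    (hI : ∀ a b, I a b = sSup {z : ℝ | z ∈ Set.Icc (0:ℝ) 1 ∧ T a z ≤ b})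
    (A : Fin (n+1) → Fin (m+1) → ℝ)
    (hA : ∀ i j, A i j ∈ Set.Icc (0:ℝ) 1)
    (F : (Fin (n+1) → ℝ) → Fin (n+1) → ℝ)
    (hF : ∀ c i, F c i = Finset.univ.sup' Finset.univ_nonempty (fun j : Fin (m+1) =>
        T (A i j) (Finset.univ.inf' Finset.univ_nonempty (fun k : Fin (n+1) => I (A k j) (c k)))))
    (b : Fin (n+1) → ℝ) (hb : ∀ i, b i ∈ Set.Icc (0:ℝ) 1)
    (C : Set (Fin (n+1) → ℝ))
    (hC : C = {c : Fin (n+1) → ℝ | (∀ i, c i ∈ Set.Icc (0:ℝ) 1) ∧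
      ∃ x : Fin (m+1) → ℝ, (∀ j, x j ∈ Set.Icc (0:ℝ) 1) ∧
        ∀ i, Finset.univ.sup' Finset.univ_nonempty (fun j => T (A i j) (x j)) = c i})
    (Δ : ℝ)
    (hΔ : Δ = sInf {d : ℝ | ∃ c ∈ C,
      d = Finset.univ.sup' Finset.univ_nonempty (fun i => |b i - c i|)})
    :
    IsLeast {d : ℝ | ∃ c ∈ C,
        d = Finset.univ.sup' Finset.univ_nonempty (fun i => |b i - c i|)} Δ ∧
    (Δ = 0 ↔ ∃ x : Fin (m+1) → ℝ, (∀ j, x j ∈ Set.Icc (0:ℝ) 1) ∧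
      ∀ i, Finset.univ.sup' Finset.univ_nonempty (fun j => T (A i j) (x j)) = b i) := by
  classical
  set S : Set (Fin (m+1) → ℝ) := Set.Icc 0 1 with hS
  have hScompact : IsCompact S := isCompact_Icc
  have hSmem : ∀ x ∈ S, ∀ j, x j ∈ Set.Icc (0:ℝ) 1 := by
    intro x hx j
    exact ⟨hx.1 j, hx.2 j⟩
  set G : (Fin (m+1) → ℝ) → (Fin (n+1) → ℝ) := fun x i =>
    Finset.univ.sup' Finset.univ_nonempty (fun j => T (A i j) (x j)) with hG
  -- C is the image of S under G
  have hCimg : C = G '' S := by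
    rw [hC]
    ext c
    constructor
    · rintro ⟨-, x, hx, hxc⟩
      refine ⟨x, ⟨fun j => (hx j).1, fun j => (hx j).2⟩, ?_⟩
      funext i; exact hxc i
    · rintro ⟨x, hx, rfl⟩
      have hx' : ∀ j, x j ∈ Set.Icc (0:ℝ) 1 := hSmem x hx
      refine ⟨?_, x, hx', fun i => rfl⟩
      intro i
      constructor
      · calc (0:ℝ) ≤ T (A i 0) (x 0) := (hmem _ (hA i 0) _ (hx' 0)).1
          _ ≤ _ := Finset.le_sup' (fun j => T (A i j) (x j)) (Finset.mem_univ (0 : Fin (m+1)))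
      · apply Finset.sup'_le
        intro j _
        exact (hmem _ (hA i j) _ (hx' j)).2
  have hGcont : ContinuousOn G S := by
    apply continuousOn_pi.2
    intro i
    apply contOn_sup'
    intro j _
    have h1 : ContinuousOn (fun x : Fin (m+1) → ℝ => ((A i j, x j) : ℝ × ℝ)) S :=
      (continuous_const.prodMk (continuous_apply j)).continuousOn
    exact hcont.comp h1 (fun x hx => ⟨hA i j, hSmem x hx j⟩)
  have hCcompact : IsCompact C := by
    rw [hCimg]; exact hScompact.image_of_continuousOn hGcont
  have hCne : C.Nonempty := by
    rw [hCimg]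
    exact ⟨G 0, ⟨0, Set.left_mem_Icc.2 zero_le_one, rfl⟩⟩
  set f : (Fin (n+1) → ℝ) → ℝ := fun c =>
    Finset.univ.sup' Finset.univ_nonempty (fun i => |b i - c i|) with hf
  have hfcont : ContinuousOn f C := by
    apply contOn_sup'
    intro i _
    exact ((continuous_const.sub (continuous_apply i)).abs).continuousOn
  set D : Set ℝ := {d : ℝ | ∃ c ∈ C, d = f c} with hD
  have hDimg : D = f '' C := by
    ext d; simp [hD, eq_comm]
  have hDcompact : IsCompact D := by
    rw [hDimg]; exact hCcompact.image_of_continuousOn hfcont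
  have hDne : D.Nonempty := by
    obtain ⟨c, hc⟩ := hCne
    exact ⟨f c, c, hc, rfl⟩
  have hleast : IsLeast D Δ := by
    rw [hΔ]
    exact hDcompact.isLeast_sInf hDne
  refine ⟨hleast, ?_, ?_⟩
  · intro h0
    have hΔD : Δ ∈ D := hleast.1
    obtain ⟨c, hcC, hcd⟩ := hΔD
    have hcb : c = b := by
      funext i
      have h1 : |b i - c i| ≤ Δ := by
        rw [hcd]; exact Finset.le_sup' (fun i => |b i - c i|) (Finset.mem_univ i)
      rw [h0] at h1
      have := abs_nonpos_iff.1 (le_trans (le_refl _) h1)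
      linarith [sub_eq_zero.1 this]
    rw [hC] at hcC
    obtain ⟨-, x, hx, hxc⟩ := hcC
    exact ⟨x, hx, fun i => by rw [hxc i, hcb]⟩
  · rintro ⟨x, hx, hxb⟩
    have hbC : b ∈ C := by
      rw [hC]; exact ⟨hb, x, hx, hxb⟩
    have h0D : (0:ℝ) ∈ D := by
      refine ⟨b, hbC, ?_⟩
      rw [hf]
      apply le_antisymm
      · calc (0:ℝ) ≤ |b 0 - b 0| := abs_nonneg _
          _ ≤ _ := Finset.le_sup' (fun i => |b i - b i|) (Finset.mem_univ (0 : Fin (n+1)))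
      · apply Finset.sup'_le; intro i _; simp
    have h1 : Δ ≤ 0 := hleast.2 h0D
    have h2 : 0 ≤ Δ := by
      obtain ⟨c, hcC, hcd⟩ := hleast.1
      rw [hcd, hf]
      calc (0:ℝ) ≤ |b 0 - c 0| := abs_nonneg _
        _ ≤ _ := Finset.le_sup' (fun i => |b i - c i|) (Finset.mem_univ (0 : Fin (n+1)))
    linarith
end

section
/- For x, y, z, u ∈ [0,1] and δ ∈ [0,1], define the Goguen implication y →_GG w = 1 if y ≤ w else w/y, and define σ_GG(u,x,y,z) = max((x − u)⁺, min(φ, (y − z)⁺)) where φ = (x·y − u·z)⁺/(u + y) if u > 0 and φ = x if u = 0. Then max(x − δ, 0) ≤ u · (y →_GG min(z + δ, 1)) if and only if σ_GG(u,x,y,z) ≤ δ. -/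
theorem stmt_14 (x y z u δ : ℝ) (hx : x ∈ Set.Icc (0:ℝ) 1) (hy : y ∈ Set.Icc (0:ℝ) 1)
    (hz : z ∈ Set.Icc (0:ℝ) 1) (hu : u ∈ Set.Icc (0:ℝ) 1) (hδ : δ ∈ Set.Icc (0:ℝ) 1) :
    max (x - δ) 0 ≤ u * (if y ≤ min (z + δ) 1 then 1 else min (z + δ) 1 / y) ↔
      max (max (x - u) 0)
        (min (if 0 < u then max (x * y - u * z) 0 / (u + y) else x) (max (y - z) 0)) ≤ δ := by
  obtain ⟨hx0, hx1⟩ := hx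
  obtain ⟨hy0, hy1⟩ := hy
  obtain ⟨hz0, hz1⟩ := hz
  obtain ⟨hu0, hu1⟩ := hu
  obtain ⟨hd0, hd1⟩ := hδ
  rcases eq_or_lt_of_le hu0 with h0 | hupos
  · -- u = 0
    rw [← h0, if_neg (lt_irrefl 0), zero_mul]
    constructor
    · intro h
      have hxδ : x - δ ≤ 0 := (max_le_iff.mp h).1
      refine max_le (max_le (by linarith) hd0) ?_
      exact le_trans (min_le_left _ _) (by linarith)
    · intro h
      have : x - 0 ≤ δ := (max_le_iff.mp (max_le_iff.mp h).1).1
      exact max_le (by linarith) le_rfl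
  · rw [if_pos hupos]
    by_cases hyz : y ≤ min (z + δ) 1
    · rw [if_pos hyz, mul_one]
      have hyzd : y ≤ z + δ := le_trans hyz (min_le_left _ _)
      have hminle : min (max (x * y - u * z) 0 / (u + y)) (max (y - z) 0) ≤ δ :=
        le_trans (min_le_right _ _) (max_le (by linarith) hd0)
      constructor
      · intro h
        have hxu : x - δ ≤ u := (max_le_iff.mp h).1
        exact max_le (max_le (by linarith) hd0) hminle
      · intro h
        have hxu : x - u ≤ δ := (max_le_iff.mp (max_le_iff.mp h).1).1
        exact max_le (by linarith) hu0
    · rw [if_neg hyz]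
      have hlt : min (z + δ) 1 < y := not_le.mp hyz
      have h1 : z + δ < y := by
        rcases le_total (z + δ) 1 with h | h
        · rwa [min_eq_left h] at hlt
        · rw [min_eq_right h] at hlt; linarith
      rw [min_eq_left (by linarith : z + δ ≤ 1)]
      have hypos : 0 < y := by linarith
      have huy : 0 < u + y := by linarith
      constructor
      · intro h
        have hL : x - δ ≤ u * (z + δ) / y := by
          have := (max_le_iff.mp h).1
          rwa [← mul_div_assoc] at this
        have hkey : x * y - u * z ≤ δ * (u + y) := by
          have := (le_div_iff₀ hypos).mp hL
          nlinarith [mul_nonneg hu0 (by linarith : (0:ℝ) ≤ y - z - δ)]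
        have hxu : x - u ≤ δ := by
          nlinarith [mul_nonneg hu0 (by linarith : (0:ℝ) ≤ y - z - δ)]
        refine max_le (max_le hxu hd0) (le_trans (min_le_left _ _) ?_)
        rw [div_le_iff₀ huy]
        exact max_le hkey (by positivity)
      · intro h
        have hmin : min (max (x * y - u * z) 0 / (u + y)) (max (y - z) 0) ≤ δ :=
          (max_le_iff.mp h).2
        have hb : ¬ (max (y - z) 0 ≤ δ) := by
          rw [not_le]
          exact lt_of_lt_of_le (by linarith) (le_max_left _ _)
        have hφ : max (x * y - u * z) 0 / (u + y) ≤ δ :=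
          (min_le_iff.mp hmin).resolve_right hb
        have hkey : x * y - u * z ≤ δ * (u + y) := by
          have := (div_le_iff₀ huy).mp hφ
          exact le_trans (le_max_left _ _) this
        refine max_le ?_ (by positivity)
        rw [← mul_div_assoc, le_div_iff₀ hypos]
        nlinarith
end

section
/- For x, y, z, u ∈ [0,1], σ_GG(u,x,y,z) = min{δ ∈ [0,1] | max(x − δ, 0) ≤ u · (y →_GG min(z + δ, 1))}, where →_GG is the Goguen implication and σ_GG(u,x,y,z) = max((x − u)⁺, min(φ, (y − z)⁺)) with φ = (x·y − u·z)⁺/(u + y) if u > 0 and φ = x if u = 0. In particular the set on the right is nonempty and has a minimum. -/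
private lemma min_lt_aux {a b : ℝ} (hb : b ≤ 1) (h : min a 1 < b) : a < b := by
  rcases le_or_gt a 1 with h1 | h1
  · rwa [min_eq_left h1] at h
  · rw [min_eq_right h1.le] at h; linarith

theorem stmt_15 (x y z u : ℝ) (hx : x ∈ Set.Icc (0:ℝ) 1) (hy : y ∈ Set.Icc (0:ℝ) 1)
    (hz : z ∈ Set.Icc (0:ℝ) 1) (hu : u ∈ Set.Icc (0:ℝ) 1) :
    IsLeast {δ : ℝ | δ ∈ Set.Icc (0:ℝ) 1 ∧
        max (x - δ) 0 ≤ u * (if y ≤ min (z + δ) 1 then 1 else min (z + δ) 1 / y)}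
      (max (max (x - u) 0)
        (min (if 0 < u then max (x * y - u * z) 0 / (u + y) else x) (max (y - z) 0))) := by
  obtain ⟨hx0, hx1⟩ := hx
  obtain ⟨hy0, hy1⟩ := hy
  obtain ⟨hz0, hz1⟩ := hz
  obtain ⟨hu0, hu1⟩ := hu
  by_cases hupos : 0 < u
  · -- case u > 0
    simp only [if_pos hupos]
    set φ : ℝ := max (x * y - u * z) 0 / (u + y) with hφ
    set s : ℝ := max (max (x - u) 0) (min φ (max (y - z) 0)) with hs
    have hs0 : 0 ≤ s := le_trans (le_max_right _ _) (le_max_left _ _)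
    have hsxu : x - u ≤ s := le_trans (le_max_left _ _) (le_max_left _ _)
    have hs1 : s ≤ 1 := by
      apply max_le
      · apply max_le <;> linarith
      · refine le_trans (min_le_right _ _) ?_
        apply max_le <;> linarith
    constructor
    · refine ⟨⟨hs0, hs1⟩, ?_⟩
      by_cases hc : y ≤ min (z + s) 1
      · rw [if_pos hc]
        apply max_le <;> linarith
      · rw [if_neg hc]
        push_neg at hc
        have hzs : z + s < y := min_lt_aux hy1 hc
        have hy0' : 0 < y := by linarith
        have hmin : min (z + s) 1 = z + s := min_eq_left (by linarith)
        rw [hmin]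
        have hφs : φ ≤ s := by
          have hmle : min φ (max (y - z) 0) ≤ s := le_max_right _ _
          by_contra hcon
          push_neg at hcon
          have h2 : max (y - z) 0 ≤ s := by
            rcases min_le_iff.mp hmle with h | h
            · linarith
            · exact h
          have : y - z ≤ s := le_trans (le_max_left _ _) h2
          linarith
        have huy : 0 < u + y := by linarith
        have hdiv : x * y - u * z ≤ s * (u + y) := by
          have h1 : max (x * y - u * z) 0 ≤ s * (u + y) := by
            rw [hφ, div_le_iff₀ huy] at hφs; exact hφs
          exact le_trans (le_max_left _ _) h1
        apply max_le
        · rw [← mul_div_assoc, le_div_iff₀ hy0']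
          nlinarith
        · positivity
    · rintro δ ⟨⟨hδ0, hδ1⟩, hδ⟩
      have hG1 : (if y ≤ min (z + δ) 1 then (1:ℝ) else min (z + δ) 1 / y) ≤ 1 := by
        split_ifs with h
        · exact le_refl 1
        · push_neg at h
          have hzd : z + δ < y := min_lt_aux hy1 h
          have hy0' : 0 < y := by linarith
          rw [div_le_one hy0']
          exact le_trans (min_le_left _ _) (le_of_lt hzd)
      have hG0 : (0:ℝ) ≤ (if y ≤ min (z + δ) 1 then (1:ℝ) else min (z + δ) 1 / y) := by
        split_ifs with h
        · norm_num
        · push_neg at h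
          have hzd : z + δ < y := min_lt_aux hy1 h
          have hy0' : 0 < y := by linarith
          have hmz : (0:ℝ) ≤ min (z + δ) 1 := le_min (by linarith) (by norm_num)
          positivity
      have hxu : x - δ ≤ u := by
        have h1 : x - δ ≤ u * (if y ≤ min (z + δ) 1 then (1:ℝ) else min (z + δ) 1 / y) :=
          le_trans (le_max_left _ _) hδ
        nlinarith
      apply max_le
      · apply max_le <;> linarith
      · by_cases hyz : y - z ≤ δ
        · refine le_trans (min_le_right _ _) ?_
          apply max_le <;> linarith
        · push_neg at hyz
          have hy0' : 0 < y := by linarith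
          have hzd : z + δ < y := by linarith
          have hmin : min (z + δ) 1 = z + δ := min_eq_left (by linarith)
          have hnc : ¬ y ≤ min (z + δ) 1 := by rw [hmin]; linarith
          rw [if_neg hnc, hmin] at hδ
          have h1 : x - δ ≤ u * ((z + δ) / y) := le_trans (le_max_left _ _) hδ
          rw [← mul_div_assoc, le_div_iff₀ hy0'] at h1
          have huy : 0 < u + y := by linarith
          refine le_trans (min_le_left _ _) ?_
          rw [hφ, div_le_iff₀ huy]
          apply max_le
          · nlinarith
          · positivity
  · -- case u = 0
    have hu : u = 0 := le_antisymm (not_lt.mp hupos) hu0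
    subst hu
    simp only [if_neg hupos, zero_mul, sub_zero]
    have hsx : max (max x 0) (min x (max (y - z) 0)) = x := by
      rw [max_eq_left hx0]
      exact max_eq_left (min_le_left _ _)
    rw [hsx]
    constructor
    · refine ⟨⟨hx0, hx1⟩, ?_⟩
      simp
    · rintro δ ⟨⟨hδ0, hδ1⟩, hδ⟩
      have : x - δ ≤ 0 := le_trans (le_max_left _ _) hδ
      linarith
end

section
/- For x, y, z, u ∈ [0,1] and δ ∈ [0,1], define Lukasiewicz implication y →_L w = min(1 − y + w, 1), v = x + u − 1, and σ_L(u,x,y,z) = min(x, max(v⁺, (v + y − z)⁺/2)). Then max(x − δ, 0) ≤ max(0, (y →_L min(z + δ, 1)) − u) if and only if σ_L(u,x,y,z) ≤ δ. -/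
theorem stmt_16 (x y z u δ : ℝ) (hx : x ∈ Set.Icc (0:ℝ) 1) (hy : y ∈ Set.Icc (0:ℝ) 1)
    (hz : z ∈ Set.Icc (0:ℝ) 1) (hu : u ∈ Set.Icc (0:ℝ) 1) (hδ : δ ∈ Set.Icc (0:ℝ) 1) :
    max (x - δ) 0 ≤ max 0 (min (1 - y + min (z + δ) 1) 1 - u) ↔
      min x (max (max (x + u - 1) 0) (max (x + u - 1 + y - z) 0 / 2)) ≤ δ := by
  obtain ⟨hx0, hx1⟩ := hx; obtain ⟨hy0, hy1⟩ := hy; obtain ⟨hz0, hz1⟩ := hz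
  obtain ⟨hu0, hu1⟩ := hu; obtain ⟨hδ0, hδ1⟩ := hδ
  rcases le_total (z + δ) 1 with h1 | h1 <;>
    [rw [min_eq_left h1]; rw [min_eq_right h1]]
  case inl =>
    rcases le_total (1 - y + (z + δ)) 1 with h2 | h2 <;>
      [rw [min_eq_left h2]; rw [min_eq_right h2]] <;>
    rcases le_total (x + u - 1) 0 with h3 | h3 <;>
    rcases le_total (x + u - 1 + y - z) 0 with h4 | h4 <;>
    (first
      | rw [max_eq_right h3, max_eq_right h4]
      | rw [max_eq_right h3, max_eq_left h4]
      | rw [max_eq_left h3, max_eq_right h4]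
      | rw [max_eq_left h3, max_eq_left h4]) <;>
    · simp only [sup_le_iff, le_sup_iff, inf_le_iff]
      constructor <;> intro h
      · rcases h with ⟨h, -⟩ | ⟨h, h'⟩ <;>
          first
          | (left; linarith)
          | (right; constructor <;> linarith)
      · rcases h with h | ⟨h, h'⟩
        · exact Or.inl ⟨by linarith, le_rfl⟩
        · rcases le_total (x - δ) 0 with hc | hc
          · exact Or.inl ⟨hc, le_rfl⟩
          · right; constructor <;> linarith
  case inr =>
    rw [min_eq_right (by linarith : (1:ℝ) ≤ 1 - y + 1)]
    rcases le_total (x + u - 1) 0 with h3 | h3 <;>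
    rcases le_total (x + u - 1 + y - z) 0 with h4 | h4 <;>
    (first
      | rw [max_eq_right h3, max_eq_right h4]
      | rw [max_eq_right h3, max_eq_left h4]
      | rw [max_eq_left h3, max_eq_right h4]
      | rw [max_eq_left h3, max_eq_left h4]) <;>
    · simp only [sup_le_iff, le_sup_iff, inf_le_iff]
      constructor <;> intro h
      · rcases h with ⟨h, -⟩ | ⟨h, h'⟩ <;>
          first
          | (left; linarith)
          | (right; constructor <;> linarith)
      · rcases h with h | ⟨h, h'⟩
        · exact Or.inl ⟨by linarith, le_rfl⟩
        · rcases le_total (x - δ) 0 with hc | hc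
          · exact Or.inl ⟨hc, le_rfl⟩
          · right; constructor <;> linarith
end

section
/- For x, y, z, u ∈ [0,1], σ_L(u,x,y,z) = min{δ ∈ [0,1] | max(x − δ, 0) ≤ max(0, (y →_L min(z + δ, 1)) − u)}, where y →_L w = min(1 − y + w, 1) and σ_L(u,x,y,z) = min(x, max((x + u − 1)⁺, (x + u − 1 + y − z)⁺/2)). -/
theorem stmt_17 (x y z u : ℝ) (hx : x ∈ Set.Icc (0:ℝ) 1) (hy : y ∈ Set.Icc (0:ℝ) 1)
    (hz : z ∈ Set.Icc (0:ℝ) 1) (hu : u ∈ Set.Icc (0:ℝ) 1) :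
    IsLeast {δ : ℝ | δ ∈ Set.Icc (0:ℝ) 1 ∧
        max (x - δ) 0 ≤ max 0 (min (1 - y + min (z + δ) 1) 1 - u)}
      (min x (max (max (x + u - 1) 0) (max (x + u - 1 + y - z) 0 / 2))) := by
  obtain ⟨hx0, hx1⟩ := hx
  obtain ⟨hy0, hy1⟩ := hy
  obtain ⟨hz0, hz1⟩ := hz
  obtain ⟨hu0, hu1⟩ := hu
  set M := max (max (x + u - 1) 0) (max (x + u - 1 + y - z) 0 / 2) with hMdef
  have hM0 : 0 ≤ M := le_trans (le_max_right _ _) (le_max_left _ _)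
  have hM1 : x + u - 1 ≤ M := le_trans (le_max_left _ _) (le_max_left _ _)
  have hM2 : (x + u - 1 + y - z) / 2 ≤ M := by
    refine le_trans ?_ (le_max_right _ _)
    have := le_max_left (x + u - 1 + y - z) 0
    linarith
  constructor
  · refine ⟨⟨le_min hx0 hM0, min_le_of_left_le hx1⟩, ?_⟩
    rcases le_total x M with h | h
    · rw [min_eq_left h]
      have : max (x - x) 0 = 0 := by simp
      rw [this]; exact le_max_left _ _
    · rw [min_eq_right h]
      have key : x - M ≤ min (1 - y + min (z + M) 1) 1 - u := by
        rcases le_total (z + M) 1 with hzM | hzM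
        · rw [min_eq_left hzM]
          refine le_sub_iff_add_le.mpr (le_min ?_ ?_) <;> linarith
        · rw [min_eq_right hzM]
          refine le_sub_iff_add_le.mpr (le_min ?_ ?_) <;> linarith
      have h2 : x - M ≤ max 0 (min (1 - y + min (z + M) 1) 1 - u) :=
        le_trans key (le_max_right _ _)
      exact max_le h2 (le_max_left _ _)
  · rintro δ ⟨⟨hδ0, hδ1⟩, hδ⟩
    rcases le_or_gt x δ with h | h
    · exact le_trans (min_le_left _ _) h
    · have hL : max (x - δ) 0 = x - δ := max_eq_left (by linarith)
      rw [hL] at hδ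
      have hR : x - δ ≤ min (1 - y + min (z + δ) 1) 1 - u := by
        rcases le_max_iff.mp hδ with h' | h'
        · linarith
        · exact h'
      have h1 : x - δ ≤ 1 - u := by
        have := min_le_right (1 - y + min (z + δ) 1) 1
        linarith
      have h3 : x + u - 1 + y - z ≤ 2 * δ := by
        have ha := min_le_left (1 - y + min (z + δ) 1) 1
        have hb := min_le_left (z + δ) 1
        linarith
      refine le_trans (min_le_right _ _) (max_le (max_le (by linarith) hδ0) ?_)
      have h4 : max (x + u - 1 + y - z) 0 ≤ 2 * δ := max_le h3 (by linarith)
      linarith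
end

section
/- Let A ∈ [0,1]^{n×m}, b ∈ [0,1]^n, and let Δ be the Chebyshev distance inf over consistent second members c (for the max-product system max_j a_{ij}·x_j = c_i) of ‖b − c‖_∞. Then Δ = max_{1≤i≤n} min_{1≤j≤m} max_{1≤k≤n} σ_GG(a_{ij}, b_i, a_{kj}, b_k), where σ_GG(u,x,y,z) = max((x−u)⁺, min(φ, (y−z)⁺)) with φ = (x·y − u·z)⁺/(u+y) if u > 0 and φ = x if u = 0. -/
noncomputable def sig18 {n m : ℕ} (A : Fin (n+1) → Fin (m+1) → ℝ) (b : Fin (n+1) → ℝ)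
    (i : Fin (n+1)) (j : Fin (m+1)) (k : Fin (n+1)) : ℝ :=
  max (max (b i - A i j) 0)
    (min (if 0 < A i j then max (b i * A k j - A i j * b k) 0 / (A i j + A k j) else b i)
      (max (A k j - b k) 0))

lemma sig18_nonneg {n m : ℕ} (A : Fin (n+1) → Fin (m+1) → ℝ) (b : Fin (n+1) → ℝ)
    (i : Fin (n+1)) (j : Fin (m+1)) (k : Fin (n+1)) : 0 ≤ sig18 A b i j k :=
  le_trans (le_max_right _ 0) (le_max_left _ _)

lemma sig18_le {n m : ℕ} (A : Fin (n+1) → Fin (m+1) → ℝ) (b : Fin (n+1) → ℝ)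
    {i k : Fin (n+1)} {j : Fin (m+1)} {t δ : ℝ}
    (hA0 : 0 ≤ A i j) (hA0' : 0 ≤ A k j) (ht1 : t ≤ 1)
    (h1 : b i - δ ≤ A i j * t) (h2 : A k j * t ≤ b k + δ) (hδ0 : 0 ≤ δ) :
    sig18 A b i j k ≤ δ := by
  unfold sig18
  refine max_le (max_le ?_ hδ0) ?_
  · nlinarith [mul_le_mul_of_nonneg_left ht1 hA0]
  · rcases le_or_gt (A k j - b k) δ with h | h
    · exact min_le_of_right_le (max_le h hδ0)
    · refine min_le_of_left_le ?_
      split_ifs with hu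
      · rw [div_le_iff₀ (by linarith)]
        refine max_le ?_ (by positivity)
        nlinarith [mul_le_mul_of_nonneg_left h1 hA0', mul_le_mul_of_nonneg_left h2 hA0]
      · have hu' : A i j = 0 := le_antisymm (not_lt.1 hu) hA0
        rw [hu', zero_mul] at h1
        linarith

lemma sig18_ge {n m : ℕ} (A : Fin (n+1) → Fin (m+1) → ℝ) (b : Fin (n+1) → ℝ)
    {i k : Fin (n+1)} {j : Fin (m+1)} {δ : ℝ}
    (hA0 : 0 ≤ A i j) (hA1 : A k j ≤ 1) (hb0 : 0 ≤ b k) (hδ0 : 0 ≤ δ)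
    (h : sig18 A b i j k ≤ δ) :
    b i - δ ≤ A i j * (if A k j ≤ min (b k + δ) 1 then 1 else min (b k + δ) 1 / A k j) := by
  unfold sig18 at h
  have h1 : b i - A i j ≤ δ := le_trans (le_max_left _ _) (le_trans (le_max_left _ _) h)
  have h2 : min (if 0 < A i j then max (b i * A k j - A i j * b k) 0 / (A i j + A k j) else b i)
      (max (A k j - b k) 0) ≤ δ := le_trans (le_max_right _ _) h
  split_ifs with hy
  · rw [mul_one]; linarith
  · push_neg at hy
    have hmin : min (b k + δ) 1 = b k + δ := by
      rcases le_total (b k + δ) 1 with h' | h'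
      · exact min_eq_left h'
      · exfalso
        rw [min_eq_right h'] at hy
        linarith
    rw [hmin] at hy ⊢
    have hy0 : 0 < A k j := lt_of_le_of_lt (by linarith) hy
    have h3 : ¬ (max (A k j - b k) 0 ≤ δ) := by
      rw [max_le_iff]
      push_neg
      intro h'
      linarith
    have h4 : (if 0 < A i j then max (b i * A k j - A i j * b k) 0 / (A i j + A k j) else b i) ≤ δ := by
      rcases min_le_iff.1 h2 with h' | h'
      · exact h'
      · exact absurd h' h3
    split_ifs at h4 with hu
    · rw [div_le_iff₀ (by linarith)] at h4
      have h5 : b i * A k j - A i j * b k ≤ δ * (A i j + A k j) := le_trans (le_max_left _ _) h4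
      rw [← mul_div_assoc, le_div_iff₀ hy0]
      nlinarith
    · have hu' : A i j = 0 := le_antisymm (not_lt.1 hu) hA0
      rw [hu', zero_mul]
      linarith

theorem stmt_18 {n m : ℕ} (A : Fin (n+1) → Fin (m+1) → ℝ)
    (hA : ∀ i j, A i j ∈ Set.Icc (0:ℝ) 1)
    (b : Fin (n+1) → ℝ) (hb : ∀ i, b i ∈ Set.Icc (0:ℝ) 1)
    (Δ : ℝ)
    (hΔ : Δ = sInf {d : ℝ | ∃ c : Fin (n+1) → ℝ,
      ((∀ i, c i ∈ Set.Icc (0:ℝ) 1) ∧ ∃ x : Fin (m+1) → ℝ,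
          (∀ j, x j ∈ Set.Icc (0:ℝ) 1) ∧
          ∀ i, Finset.univ.sup' Finset.univ_nonempty (fun j => A i j * x j) = c i) ∧
      d = Finset.univ.sup' Finset.univ_nonempty (fun i => |b i - c i|)}) :
    Δ = Finset.univ.sup' Finset.univ_nonempty (fun i : Fin (n+1) =>
      Finset.univ.inf' Finset.univ_nonempty (fun j : Fin (m+1) =>
        Finset.univ.sup' Finset.univ_nonempty (fun k : Fin (n+1) =>
          max (max (b i - A i j) 0)
            (min (if 0 < A i j then max (b i * A k j - A i j * b k) 0 / (A i j + A k j) else b i)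
              (max (A k j - b k) 0))))) := by
  have hA0 : ∀ i j, 0 ≤ A i j := fun i j => (hA i j).1
  have hA1 : ∀ i j, A i j ≤ 1 := fun i j => (hA i j).2
  have hb0 : ∀ i, 0 ≤ b i := fun i => (hb i).1
  show Δ = Finset.univ.sup' Finset.univ_nonempty (fun i : Fin (n+1) =>
      Finset.univ.inf' Finset.univ_nonempty (fun j : Fin (m+1) =>
        Finset.univ.sup' Finset.univ_nonempty (fun k : Fin (n+1) => sig18 A b i j k)))
  set D : ℝ := Finset.univ.sup' Finset.univ_nonempty (fun i : Fin (n+1) =>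
      Finset.univ.inf' Finset.univ_nonempty (fun j : Fin (m+1) =>
        Finset.univ.sup' Finset.univ_nonempty (fun k : Fin (n+1) => sig18 A b i j k))) with hDdef
  have hD0 : (0:ℝ) ≤ D := by
    rw [hDdef]
    refine le_trans ?_ (Finset.le_sup' _ (Finset.mem_univ (0 : Fin (n+1))))
    refine Finset.le_inf' _ _ fun j _ => ?_
    exact le_trans (sig18_nonneg A b 0 j 0) (Finset.le_sup' _ (Finset.mem_univ (0 : Fin (n+1))))
  -- construction of the best approximation
  have hw0 : ∀ k : Fin (n+1), (0:ℝ) ≤ min (b k + D) 1 :=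
    fun k => le_min (by linarith [hb0 k]) zero_le_one
  obtain ⟨xD, hxDdef⟩ : ∃ xD : Fin (m+1) → ℝ, xD = fun j => Finset.univ.inf' Finset.univ_nonempty
      (fun k => if A k j ≤ min (b k + D) 1 then 1 else min (b k + D) 1 / A k j) := ⟨_, rfl⟩
  obtain ⟨cD, hcDdef⟩ : ∃ cD : Fin (n+1) → ℝ, cD = fun i =>
      Finset.univ.sup' Finset.univ_nonempty (fun j => A i j * xD j) := ⟨_, rfl⟩
  have hg01 : ∀ (k : Fin (n+1)) (j : Fin (m+1)),
      (if A k j ≤ min (b k + D) 1 then 1 else min (b k + D) 1 / A k j) ∈ Set.Icc (0:ℝ) 1 := by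
    intro k j
    split_ifs with h
    · exact ⟨zero_le_one, le_refl 1⟩
    · push_neg at h
      have hAkj : 0 < A k j := lt_of_le_of_lt (hw0 k) h
      exact ⟨div_nonneg (hw0 k) hAkj.le, (div_le_one hAkj).2 h.le⟩
  have hx01 : ∀ j, xD j ∈ Set.Icc (0:ℝ) 1 := by
    intro j
    rw [hxDdef]
    constructor
    · exact Finset.le_inf' _ _ fun k _ => (hg01 k j).1
    · exact le_trans (Finset.inf'_le _ (Finset.mem_univ 0)) (hg01 0 j).2
  have hc01 : ∀ i, cD i ∈ Set.Icc (0:ℝ) 1 := by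
    intro i
    rw [hcDdef]
    constructor
    · exact le_trans (mul_nonneg (hA0 i 0) (hx01 0).1) (Finset.le_sup' (fun j => A i j * xD j) (Finset.mem_univ 0))
    · exact Finset.sup'_le _ _ fun j _ => mul_le_one₀ (hA1 i j) (hx01 j).1 (hx01 j).2
  have hup : ∀ i, cD i ≤ b i + D := by
    intro i
    rw [hcDdef]
    refine Finset.sup'_le _ _ fun j _ => ?_
    have hxle : xD j ≤ (if A i j ≤ min (b i + D) 1 then 1 else min (b i + D) 1 / A i j) := by
      rw [hxDdef]
      exact Finset.inf'_le _ (Finset.mem_univ i)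
    have hgw : A i j * (if A i j ≤ min (b i + D) 1 then 1 else min (b i + D) 1 / A i j)
        ≤ min (b i + D) 1 := by
      split_ifs with h
      · rw [mul_one]; exact h
      · push_neg at h
        have hpos : 0 < A i j := lt_of_le_of_lt (hw0 i) h
        have : A i j * (min (b i + D) 1 / A i j) = min (b i + D) 1 := by
          field_simp
        rw [this]
    calc A i j * xD j ≤ A i j * _ := mul_le_mul_of_nonneg_left hxle (hA0 i j)
      _ ≤ min (b i + D) 1 := hgw
      _ ≤ b i + D := min_le_left _ _
  have hdown : ∀ i, b i - D ≤ cD i := by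
    intro i
    have hinf : Finset.univ.inf' Finset.univ_nonempty (fun j =>
        Finset.univ.sup' Finset.univ_nonempty (fun k => sig18 A b i j k)) ≤ D := by
      rw [hDdef]
      exact Finset.le_sup' (fun i => Finset.univ.inf' Finset.univ_nonempty (fun j =>
        Finset.univ.sup' Finset.univ_nonempty (fun k => sig18 A b i j k))) (Finset.mem_univ i)
    obtain ⟨j, -, hj⟩ := Finset.exists_mem_eq_inf' (Finset.univ_nonempty)
      (fun j : Fin (m+1) => Finset.univ.sup' Finset.univ_nonempty (fun k => sig18 A b i j k))
    rw [hj] at hinf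
    have hσle : ∀ k, sig18 A b i j k ≤ D := fun k =>
      le_trans (Finset.le_sup' _ (Finset.mem_univ k)) hinf
    obtain ⟨k0, -, hk0⟩ := Finset.exists_mem_eq_inf' (Finset.univ_nonempty)
      (fun k : Fin (n+1) => if A k j ≤ min (b k + D) 1 then 1 else min (b k + D) 1 / A k j)
    have key : b i - D ≤ A i j * xD j := by
      simp only [hxDdef]
      rw [hk0]
      exact sig18_ge A b (hA0 i j) (hA1 k0 j) (hb0 k0) hD0 (hσle k0)
    refine le_trans key ?_
    rw [hcDdef]
    exact Finset.le_sup' (fun j => A i j * xD j) (Finset.mem_univ j)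
  have hdist : ∀ i, |b i - cD i| ≤ D := by
    intro i
    rw [abs_le]
    constructor
    · linarith [hup i]
    · linarith [hdown i]
  rw [hΔ]
  apply le_antisymm
  · have hmem : (Finset.univ.sup' Finset.univ_nonempty (fun i => |b i - cD i|)) ∈
        {d : ℝ | ∃ c : Fin (n+1) → ℝ,
          ((∀ i, c i ∈ Set.Icc (0:ℝ) 1) ∧ ∃ x : Fin (m+1) → ℝ,
              (∀ j, x j ∈ Set.Icc (0:ℝ) 1) ∧
              ∀ i, Finset.univ.sup' Finset.univ_nonempty (fun j => A i j * x j) = c i) ∧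
          d = Finset.univ.sup' Finset.univ_nonempty (fun i => |b i - c i|)} :=
      ⟨cD, ⟨hc01, xD, hx01, fun i => by rw [hcDdef]⟩, rfl⟩
    refine le_trans (csInf_le ⟨0, ?_⟩ hmem) (Finset.sup'_le _ _ fun i _ => hdist i)
    rintro d ⟨c, -, rfl⟩
    exact le_trans (abs_nonneg _) (Finset.le_sup' (fun i => |b i - c i|) (Finset.mem_univ 0))
  · refine le_csInf ⟨_, ⟨cD, ⟨hc01, xD, hx01, fun i => by rw [hcDdef]⟩, rfl⟩⟩ ?_
    rintro d ⟨c, ⟨hc01', x, hx01', hcons⟩, rfl⟩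
    have habs : ∀ i, |b i - c i| ≤ Finset.univ.sup' Finset.univ_nonempty (fun i => |b i - c i|) :=
      fun i => Finset.le_sup' (fun i => |b i - c i|) (Finset.mem_univ i)
    have hδ0 : (0:ℝ) ≤ Finset.univ.sup' Finset.univ_nonempty (fun i => |b i - c i|) :=
      le_trans (abs_nonneg _) (habs 0)
    rw [hDdef]
    refine Finset.sup'_le _ _ fun i _ => ?_
    obtain ⟨j, -, hj⟩ := Finset.exists_mem_eq_sup' (Finset.univ_nonempty)
      (fun j : Fin (m+1) => A i j * x j)
    refine le_trans (Finset.inf'_le _ (Finset.mem_univ j)) ?_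
    refine Finset.sup'_le _ _ fun k _ => ?_
    have hci : c i = A i j * x j := by rw [← hcons i, hj]
    have h1 : b i - Finset.univ.sup' Finset.univ_nonempty (fun i => |b i - c i|) ≤ A i j * x j := by
      have h' := (abs_le.1 (habs i)).2
      linarith [hci ▸ h']
    have h2 : A k j * x j ≤ b k + Finset.univ.sup' Finset.univ_nonempty (fun i => |b i - c i|) := by
      have hle : A k j * x j ≤ c k := by
        rw [← hcons k]
        exact Finset.le_sup' (fun j => A k j * x j) (Finset.mem_univ j)
      have h' := (abs_le.1 (habs k)).1
      linarith
    exact sig18_le A b (hA0 i j) (hA0 k j) (hx01' j).2 h1 h2 hδ0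
end

section
/- Let A ∈ [0,1]^{n×m}, b ∈ [0,1]^n, and let Δ be the Chebyshev distance inf over consistent second members c (for the max-Lukasiewicz system max_j max(a_{ij} + x_j − 1, 0) = c_i) of ‖b − c‖_∞. Then Δ = max_{1≤i≤n} min_{1≤j≤m} max_{1≤k≤n} σ_L(1 − a_{ij}, b_i, a_{kj}, b_k), where σ_L(u,x,y,z) = min(x, max((x+u−1)⁺, (x+u−1+y−z)⁺/2)). -/
theorem stmt_19 {n m : ℕ} (A : Fin (n+1) → Fin (m+1) → ℝ)
    (hA : ∀ i j, A i j ∈ Set.Icc (0:ℝ) 1)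
    (b : Fin (n+1) → ℝ) (hb : ∀ i, b i ∈ Set.Icc (0:ℝ) 1)
    (Δ : ℝ)
    (hΔ : Δ = sInf {d : ℝ | ∃ c : Fin (n+1) → ℝ,
      ((∀ i, c i ∈ Set.Icc (0:ℝ) 1) ∧ ∃ x : Fin (m+1) → ℝ,
          (∀ j, x j ∈ Set.Icc (0:ℝ) 1) ∧
          ∀ i, Finset.univ.sup' Finset.univ_nonempty (fun j => max (A i j + x j - 1) 0) = c i) ∧
      d = Finset.univ.sup' Finset.univ_nonempty (fun i => |b i - c i|)}) :
    Δ = Finset.univ.sup' Finset.univ_nonempty (fun i : Fin (n+1) =>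
      Finset.univ.inf' Finset.univ_nonempty (fun j : Fin (m+1) =>
        Finset.univ.sup' Finset.univ_nonempty (fun k : Fin (n+1) =>
          min (b i) (max (max (b i + (1 - A i j) - 1) 0)
            (max (b i + (1 - A i j) - 1 + A k j - b k) 0 / 2))))) := by
  set D := Finset.univ.sup' Finset.univ_nonempty (fun i : Fin (n+1) =>
      Finset.univ.inf' Finset.univ_nonempty (fun j : Fin (m+1) =>
        Finset.univ.sup' Finset.univ_nonempty (fun k : Fin (n+1) =>
          min (b i) (max (max (b i + (1 - A i j) - 1) 0)
            (max (b i + (1 - A i j) - 1 + A k j - b k) 0 / 2))))) with hDdef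
  set S := {d : ℝ | ∃ c : Fin (n+1) → ℝ,
      ((∀ i, c i ∈ Set.Icc (0:ℝ) 1) ∧ ∃ x : Fin (m+1) → ℝ,
          (∀ j, x j ∈ Set.Icc (0:ℝ) 1) ∧
          ∀ i, Finset.univ.sup' Finset.univ_nonempty (fun j => max (A i j + x j - 1) 0) = c i) ∧
      d = Finset.univ.sup' Finset.univ_nonempty (fun i => |b i - c i|)} with hSdef
  -- D is nonnegative
  have hD0 : (0:ℝ) ≤ D := by
    refine le_trans ?_ (Finset.le_sup' _ (Finset.mem_univ (0 : Fin (n+1))))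
    apply Finset.le_inf'
    intro j _
    refine le_trans ?_ (Finset.le_sup' _ (Finset.mem_univ (0 : Fin (n+1))))
    exact le_min (hb 0).1 (le_trans (le_max_right _ 0) (le_max_left _ _))
  -- D is a lower bound of S
  have hlb : ∀ d ∈ S, D ≤ d := by
    rintro d ⟨c, ⟨hc01, x, hx01, hcx⟩, rfl⟩
    set d := Finset.univ.sup' Finset.univ_nonempty (fun i => |b i - c i|) with hd
    have hdabs : ∀ i, |b i - c i| ≤ d := by
      rw [hd]
      exact fun i => Finset.le_sup' (fun i => |b i - c i|) (Finset.mem_univ i)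
    have hd0 : (0:ℝ) ≤ d := le_trans (abs_nonneg _) (hdabs 0)
    apply Finset.sup'_le
    intro i _
    by_cases hbi : b i ≤ d
    · refine le_trans (Finset.inf'_le _ (Finset.mem_univ (0 : Fin (m+1)))) ?_
      apply Finset.sup'_le
      intro k _
      exact le_trans (min_le_left _ _) hbi
    · push_neg at hbi
      have hci : b i - d ≤ c i := by
        have := (abs_le.1 (hdabs i)).2; linarith
      have hsup : b i - d ≤ Finset.univ.sup' Finset.univ_nonempty
          (fun j => max (A i j + x j - 1) 0) := by rw [hcx i]; exact hci
      obtain ⟨j, -, hj⟩ := (Finset.le_sup'_iff _).1 hsup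
      have hj' : b i - d ≤ A i j + x j - 1 := by
        rcases le_max_iff.1 hj with h | h
        · exact h
        · linarith
      refine le_trans (Finset.inf'_le _ (Finset.mem_univ j)) ?_
      apply Finset.sup'_le
      intro k _
      have hck : c k ≤ b k + d := by
        have := (abs_le.1 (hdabs k)).1; linarith
      have hck2 : A k j + x j - 1 ≤ c k := by
        rw [← hcx k]
        exact le_trans (le_max_left _ _)
          (Finset.le_sup' (fun j => max (A k j + x j - 1) 0) (Finset.mem_univ j))
      have hxj1 : x j ≤ 1 := (hx01 j).2
      refine le_trans (min_le_right _ _) ?_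
      apply max_le
      · exact max_le (by linarith) hd0
      · rw [div_le_iff₀ (by norm_num : (0:ℝ) < 2)]
        exact max_le (by linarith) (by linarith)
  -- construct a consistent c achieving distance ≤ D
  have hconstruct : ∃ d' ∈ S, d' ≤ D := by
    set x : Fin (m+1) → ℝ := fun j =>
      Finset.univ.inf' Finset.univ_nonempty (fun k => min 1 (1 - A k j + b k + D)) with hx
    have hx01 : ∀ j, x j ∈ Set.Icc (0:ℝ) 1 := by
      intro j
      constructor
      · apply Finset.le_inf'
        intro k _
        have h1 := (hA k j).2
        have h2 := (hb k).1
        exact le_min (by norm_num) (by linarith)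
      · exact le_trans (Finset.inf'_le _ (Finset.mem_univ (0 : Fin (n+1)))) (min_le_left _ _)
    set c : Fin (n+1) → ℝ := fun i =>
      Finset.univ.sup' Finset.univ_nonempty (fun j => max (A i j + x j - 1) 0) with hc
    have hc01 : ∀ i, c i ∈ Set.Icc (0:ℝ) 1 := by
      intro i
      constructor
      · exact le_trans (le_max_right _ _)
          (Finset.le_sup' (fun j => max (A i j + x j - 1) 0) (Finset.mem_univ (0 : Fin (m+1))))
      · apply Finset.sup'_le
        intro j _
        have h1 := (hA i j).2
        have h2 := (hx01 j).2
        exact max_le (by linarith) (by norm_num)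
    have hupper : ∀ i, c i ≤ b i + D := by
      intro i
      apply Finset.sup'_le
      intro j _
      have hxle : x j ≤ 1 - A i j + b i + D :=
        le_trans (Finset.inf'_le _ (Finset.mem_univ i)) (min_le_right _ _)
      have h2 := (hb i).1
      exact max_le (by linarith) (by linarith)
    have hlower : ∀ i, b i - D ≤ c i := by
      intro i
      have hiD : Finset.univ.inf' Finset.univ_nonempty (fun j : Fin (m+1) =>
          Finset.univ.sup' Finset.univ_nonempty (fun k : Fin (n+1) =>
            min (b i) (max (max (b i + (1 - A i j) - 1) 0)
              (max (b i + (1 - A i j) - 1 + A k j - b k) 0 / 2)))) ≤ D := by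
        rw [hDdef]
        exact Finset.le_sup' (fun i : Fin (n+1) =>
          Finset.univ.inf' Finset.univ_nonempty (fun j : Fin (m+1) =>
            Finset.univ.sup' Finset.univ_nonempty (fun k : Fin (n+1) =>
              min (b i) (max (max (b i + (1 - A i j) - 1) 0)
                (max (b i + (1 - A i j) - 1 + A k j - b k) 0 / 2))))) (Finset.mem_univ i)
      obtain ⟨j, -, hj⟩ := (Finset.inf'_le_iff _).1 hiD
      by_cases hbi : b i ≤ D
      · have := (hc01 i).1; linarith
      · push_neg at hbi
        have hk : ∀ k : Fin (n+1), max (max (b i + (1 - A i j) - 1) 0)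
            (max (b i + (1 - A i j) - 1 + A k j - b k) 0 / 2) ≤ D := by
          intro k
          have h1 : min (b i) (max (max (b i + (1 - A i j) - 1) 0)
              (max (b i + (1 - A i j) - 1 + A k j - b k) 0 / 2)) ≤ D :=
            le_trans (Finset.le_sup' (fun k : Fin (n+1) =>
              min (b i) (max (max (b i + (1 - A i j) - 1) 0)
                (max (b i + (1 - A i j) - 1 + A k j - b k) 0 / 2))) (Finset.mem_univ k)) hj
          rcases min_le_iff.1 h1 with h | h
          · linarith
          · exact h
        have hxge : 1 - A i j + b i - D ≤ x j := by
          apply Finset.le_inf'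
          intro k _
          have h2 := hk k
          have h3 : b i + (1 - A i j) - 1 ≤ D :=
            le_trans (le_max_left _ _) (le_trans (le_max_left _ _) h2)
          have h5 : max (b i + (1 - A i j) - 1 + A k j - b k) 0 / 2 ≤ D :=
            le_trans (le_max_right _ _) h2
          have h6 : b i + (1 - A i j) - 1 + A k j - b k ≤
              max (b i + (1 - A i j) - 1 + A k j - b k) 0 := le_max_left _ _
          exact le_min (by linarith) (by linarith)
        have hcij : A i j + x j - 1 ≤ c i :=
          le_trans (le_max_left _ _)
            (Finset.le_sup' (fun j => max (A i j + x j - 1) 0) (Finset.mem_univ j))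
        linarith
    refine ⟨Finset.univ.sup' Finset.univ_nonempty (fun i => |b i - c i|),
      ⟨c, ⟨hc01, x, hx01, fun i => ?_⟩, rfl⟩, ?_⟩
    · rw [hc]
    · apply Finset.sup'_le
      intro i _
      rw [abs_le]
      exact ⟨by linarith [hupper i], by linarith [hlower i]⟩
  obtain ⟨d', hd'S, hd'D⟩ := hconstruct
  rw [hΔ]
  exact le_antisymm (le_trans (csInf_le ⟨D, hlb⟩ hd'S) hd'D) (le_csInf ⟨d', hd'S⟩ hlb)
end
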